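/- arXiv:math/9911091 — 8 statements merged into one kernel-verified Lean document; each statement's English description precedes it below -/
import Mathlib

section
/- Let G be a finite group with subgroups G₊ and G₋ such that every g ∈ G can be written uniquely as g = g₊g₋ with g₊ ∈ G₊ and g₋ ∈ G₋. Then the operations ⟨g⟩⟨h⟩ = ⟨gh₋⟩ if ḡ₊ = h₊ and 0 otherwise; Δ⟨g⟩ = Σ over pairs (h,k) with h₊k = g and k̄₋ = h₋ of ⟨h⟩⊗⟨k⟩; unit 1 = Σ_{g₊∈G₊}⟨g₊⟩; counit ε⟨g⟩ = 1 if g₊ = e and 0 otherwise; antipode S⟨g⟩ = ⟨g⁻¹⟩, make the complex vector space H(G;G₊,G₋) with basis {⟨g⟩ : g ∈ G} into a Hopf algebra over ℂ, and the basis {⟨g⟩ : g ∈ G} is a positive basis of this Hopf algebra. -/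
open scoped TensorProduct ComplexOrder

structure IsPositiveBasis {H : Type*} [Ring H] [HopfAlgebra ℂ H] {ι : Type*}
    (B : Module.Basis ι ℂ H) : Prop where
  one_nonneg : ∀ i, 0 ≤ B.repr 1 i
  counit_nonneg : ∀ i, 0 ≤ Coalgebra.counit (R := ℂ) (B i)
  mul_nonneg : ∀ i j k, 0 ≤ B.repr (B i * B j) k
  comul_nonneg : ∀ i j k,
    0 ≤ (B.tensorProduct B).repr (Coalgebra.comul (R := ℂ) (B i)) (j, k)
  antipode_nonneg : ∀ i j, 0 ≤ B.repr (HopfAlgebra.antipode (R := ℂ) (B i)) j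

def IsExactFactorization {G : Type*} [Group G] (Gp Gn : Subgroup G) : Prop :=
  ∀ g : G, ∃! p : Gp × Gn, (p.1 : G) * (p.2 : G) = g

section
variable {G : Type*} [Group G] {Gp Gn : Subgroup G}
noncomputable def fplus (hF : IsExactFactorization Gp Gn) (g : G) : G :=
  ((hF g).choose.1 : G)
noncomputable def fminus (hF : IsExactFactorization Gp Gn) (g : G) : G :=
  ((hF g).choose.2 : G)
noncomputable def fbarPlus (hF : IsExactFactorization Gp Gn) (g : G) : G :=
  (fplus hF g⁻¹)⁻¹
noncomputable def fbarMinus (hF : IsExactFactorization Gp Gn) (g : G) : G :=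
  (fminus hF g⁻¹)⁻¹
end

/-- A Hopf algebra over `ℂ`, bundled. -/
structure HopfAlgebraOver : Type 1 where
  carrier : Type
  [ring : Ring carrier]
  [hopf : HopfAlgebra ℂ carrier]

attribute [instance] HopfAlgebraOver.ring HopfAlgebraOver.hopf

/-- A finite group together with an exact factorization into two subgroups, bundled. -/
structure FactorizedGroup : Type 1 where
  G : Type
  [grp : Group G]
  [fin : Fintype G]
  Gp : Subgroup G
  Gn : Subgroup G
  fact : IsExactFactorization Gp Gn

attribute [instance] FactorizedGroup.grp FactorizedGroup.fin

/-!
Write `g = g₊ g₋ = ḡ₋ ḡ₊`. All structure maps are given on the basis `⟨g⟩`, so each Hopf axiom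
is an identity between factorizations in `G`, and these all come from uniqueness of the
factorization: it is equivariant (`(a g)₊ = a g₊` for `a ∈ G₊`, `(g b)₋ = g₋ b` for `b ∈ G₋`,
and the barred analogues), if `ḡ₊ = k₊` then `g k₋ = (ḡ₋ k̄₋) k̄₊` (associativity and
multiplicativity of `Δ`), and `a ↦ (a⁻¹ g)‾₊` permutes `G₊` (the antipode). Since
`Δ⟨g⟩ = ∑_{a ∈ G₊} ⟨a (a⁻¹ g)‾₋⟩ ⊗ ⟨a⁻¹ g⟩` has distinct terms and a product of basis vectors is a
basis vector or zero, every structure constant is `0` or `1`, which is positivity.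
-/

theorem Subgroup.sum_ite_coe_eq {G M : Type*} [Group G] [AddCommMonoid M] [DecidableEq G]
    {H : Subgroup G} [Fintype H] {x : G} (hx : x ∈ H) (f : H → M) :
    ∑ a : H, (if (a : G) = x then f a else 0) = f ⟨x, hx⟩ := by
  rw [Fintype.sum_eq_single ⟨x, hx⟩ fun a ha => if_neg fun h => ha (Subtype.ext h)]
  exact if_pos rfl

section ExactFactorization

variable {G : Type*} [Group G] {Gp Gn : Subgroup G} (hF : IsExactFactorization Gp Gn)

theorem fplus_mem (g : G) : fplus hF g ∈ Gp := (hF g).choose.1.2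

theorem fminus_mem (g : G) : fminus hF g ∈ Gn := (hF g).choose.2.2

theorem fbarPlus_mem (g : G) : fbarPlus hF g ∈ Gp := inv_mem (fplus_mem hF g⁻¹)

theorem fbarMinus_mem (g : G) : fbarMinus hF g ∈ Gn := inv_mem (fminus_mem hF g⁻¹)

@[simp]
theorem fplus_mul_fminus (g : G) : fplus hF g * fminus hF g = g := (hF g).choose_spec.1

@[simp]
theorem fbarMinus_mul_fbarPlus (g : G) : fbarMinus hF g * fbarPlus hF g = g := by
  rw [fbarMinus, fbarPlus, ← mul_inv_rev, fplus_mul_fminus, inv_inv]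

theorem fplus_fminus_eq_of_mul_eq {a b g : G} (ha : a ∈ Gp) (hb : b ∈ Gn) (h : a * b = g) :
    fplus hF g = a ∧ fminus hF g = b := by
  have h' := (hF g).choose_spec.2 (⟨a, ha⟩, ⟨b, hb⟩) h
  rw [fplus, fminus, ← h']
  exact ⟨rfl, rfl⟩

theorem fbarPlus_fbarMinus_eq_of_mul_eq {a b g : G} (hb : b ∈ Gn) (ha : a ∈ Gp) (h : b * a = g) :
    fbarPlus hF g = a ∧ fbarMinus hF g = b := by
  obtain ⟨h₁, h₂⟩ :=
    fplus_fminus_eq_of_mul_eq hF (inv_mem ha) (inv_mem hb) (by rw [← h, mul_inv_rev] : _ = g⁻¹)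
  simp [fbarPlus, fbarMinus, h₁, h₂]

theorem fplus_mul_left {a : G} (ha : a ∈ Gp) (g : G) : fplus hF (a * g) = a * fplus hF g :=
  (fplus_fminus_eq_of_mul_eq hF (mul_mem ha (fplus_mem hF g)) (fminus_mem hF g)
    (by rw [mul_assoc, fplus_mul_fminus])).1

theorem fminus_mul_left {a : G} (ha : a ∈ Gp) (g : G) : fminus hF (a * g) = fminus hF g :=
  (fplus_fminus_eq_of_mul_eq hF (mul_mem ha (fplus_mem hF g)) (fminus_mem hF g)
    (by rw [mul_assoc, fplus_mul_fminus])).2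

theorem fplus_mul_right {b : G} (hb : b ∈ Gn) (g : G) : fplus hF (g * b) = fplus hF g :=
  (fplus_fminus_eq_of_mul_eq hF (fplus_mem hF g) (mul_mem (fminus_mem hF g) hb)
    (by rw [← mul_assoc, fplus_mul_fminus])).1

theorem fminus_mul_right {b : G} (hb : b ∈ Gn) (g : G) :
    fminus hF (g * b) = fminus hF g * b :=
  (fplus_fminus_eq_of_mul_eq hF (fplus_mem hF g) (mul_mem (fminus_mem hF g) hb)
    (by rw [← mul_assoc, fplus_mul_fminus])).2

theorem fbarPlus_mul_right {a : G} (ha : a ∈ Gp) (g : G) :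
    fbarPlus hF (g * a) = fbarPlus hF g * a :=
  (fbarPlus_fbarMinus_eq_of_mul_eq hF (fbarMinus_mem hF g) (mul_mem (fbarPlus_mem hF g) ha)
    (by rw [← mul_assoc, fbarMinus_mul_fbarPlus])).1

theorem fbarMinus_mul_right {a : G} (ha : a ∈ Gp) (g : G) :
    fbarMinus hF (g * a) = fbarMinus hF g :=
  (fbarPlus_fbarMinus_eq_of_mul_eq hF (fbarMinus_mem hF g) (mul_mem (fbarPlus_mem hF g) ha)
    (by rw [← mul_assoc, fbarMinus_mul_fbarPlus])).2

theorem fplus_eq_one_iff {g : G} : fplus hF g = 1 ↔ g ∈ Gn := by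
  refine ⟨fun h => ?_, fun hg => (fplus_fminus_eq_of_mul_eq hF Gp.one_mem hg (one_mul g)).1⟩
  rw [← fplus_mul_fminus hF g, h, one_mul]
  exact fminus_mem hF g

theorem fbarPlus_eq_one_iff {g : G} : fbarPlus hF g = 1 ↔ g ∈ Gn := by
  refine ⟨fun h => ?_,
    fun hg => (fbarPlus_fbarMinus_eq_of_mul_eq hF hg Gp.one_mem (mul_one g)).1⟩
  rw [← fbarMinus_mul_fbarPlus hF g, h, mul_one]
  exact fbarMinus_mem hF g

theorem fplus_eq_self {a : G} (ha : a ∈ Gp) : fplus hF a = a :=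
  (fplus_fminus_eq_of_mul_eq hF ha Gn.one_mem (mul_one a)).1

theorem fminus_eq_one {a : G} (ha : a ∈ Gp) : fminus hF a = 1 :=
  (fplus_fminus_eq_of_mul_eq hF ha Gn.one_mem (mul_one a)).2

theorem fbarPlus_eq_self {a : G} (ha : a ∈ Gp) : fbarPlus hF a = a :=
  (fbarPlus_fbarMinus_eq_of_mul_eq hF Gn.one_mem ha (one_mul a)).1

theorem fbarMinus_eq_one {a : G} (ha : a ∈ Gp) : fbarMinus hF a = 1 :=
  (fbarPlus_fbarMinus_eq_of_mul_eq hF Gn.one_mem ha (one_mul a)).2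

theorem fbarMinus_eq_self {b : G} (hb : b ∈ Gn) : fbarMinus hF b = b :=
  (fbarPlus_fbarMinus_eq_of_mul_eq hF hb Gp.one_mem (mul_one b)).2

theorem fplus_inv (g : G) : fplus hF g⁻¹ = (fbarPlus hF g)⁻¹ := by rw [fbarPlus, inv_inv]

theorem fminus_inv (g : G) : fminus hF g⁻¹ = (fbarMinus hF g)⁻¹ := by rw [fbarMinus, inv_inv]

theorem fbarPlus_inv (g : G) : fbarPlus hF g⁻¹ = (fplus hF g)⁻¹ := by rw [fbarPlus, inv_inv]

theorem fbarPlus_mul_fminus {g k : G} (h : fbarPlus hF g = fplus hF k) :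
    fbarPlus hF (g * fminus hF k) = fbarPlus hF k ∧
      fbarMinus hF (g * fminus hF k) = fbarMinus hF g * fbarMinus hF k := by
  refine fbarPlus_fbarMinus_eq_of_mul_eq hF
    (mul_mem (fbarMinus_mem hF g) (fbarMinus_mem hF k)) (fbarPlus_mem hF k) ?_
  conv_rhs => rw [← fbarMinus_mul_fbarPlus hF g, h, mul_assoc, fplus_mul_fminus]
  rw [mul_assoc, fbarMinus_mul_fbarPlus]

-- In `Δ⟨g⟩`, the partner of `⟨k⟩` with `k = a⁻¹ g`: the unique `h` with `h₊ = a` and `h₋ = k̄₋`.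
noncomputable def comulLeft (g a : G) : G := a * fbarMinus hF (a⁻¹ * g)

theorem comulLeft_eq (g a : G) : comulLeft hF g a = g * (fbarPlus hF (a⁻¹ * g))⁻¹ := by
  rw [comulLeft, eq_mul_inv_iff_mul_eq, mul_assoc, fbarMinus_mul_fbarPlus, mul_inv_cancel_left]

theorem fplus_comulLeft (g : G) {a : G} (ha : a ∈ Gp) : fplus hF (comulLeft hF g a) = a :=
  (fplus_fminus_eq_of_mul_eq hF ha (fbarMinus_mem hF _) rfl).1

theorem fminus_comulLeft (g : G) {a : G} (ha : a ∈ Gp) :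
    fminus hF (comulLeft hF g a) = fbarMinus hF (a⁻¹ * g) :=
  (fplus_fminus_eq_of_mul_eq hF ha (fbarMinus_mem hF _) rfl).2

theorem fbarPlus_comulLeft (g a : G) :
    fbarPlus hF (comulLeft hF g a) = fbarPlus hF g * (fbarPlus hF (a⁻¹ * g))⁻¹ := by
  rw [comulLeft_eq, fbarPlus_mul_right hF (inv_mem (fbarPlus_mem hF _))]

theorem comulLeft_eq_and_inv_mul_eq_iff {g h k a : G} (ha : a ∈ Gp) :
    comulLeft hF g a = h ∧ a⁻¹ * g = k ↔
      a = fplus hF h ∧ fplus hF h * k = g ∧ fbarMinus hF k = fminus hF h := by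
  constructor
  · rintro ⟨rfl, rfl⟩
    rw [fplus_comulLeft hF g ha, fminus_comulLeft hF g ha, mul_inv_cancel_left]
    exact ⟨rfl, rfl, rfl⟩
  · rintro ⟨rfl, rfl, hk⟩
    rw [comulLeft, inv_mul_cancel_left, hk, fplus_mul_fminus]
    exact ⟨rfl, rfl⟩

noncomputable def fbarPlusPerm (g : G) : Equiv.Perm Gp where
  toFun a := ⟨fbarPlus hF ((a : G)⁻¹ * g), fbarPlus_mem hF _⟩
  invFun c := ⟨fplus hF (g * (c : G)⁻¹), fplus_mem hF _⟩
  left_inv a := by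
    ext
    simp only [← comulLeft_eq]
    exact fplus_comulLeft hF g a.2
  right_inv c := by
    ext
    refine (fbarPlus_fbarMinus_eq_of_mul_eq hF (fminus_mem hF (g * (c : G)⁻¹)) c.2 ?_).1
    rw [eq_inv_mul_iff_mul_eq, ← mul_assoc, fplus_mul_fminus, inv_mul_cancel_right]

end ExactFactorization

-- Indexed by the factorization, so that the ring structure built from it can be an instance.
variable (R : Type*) [CommRing R] in
def FactorizationHopf {G : Type*} [Group G] {Gp Gn : Subgroup G}
    (_ : IsExactFactorization Gp Gn) : Type _ :=
  G → R

namespace FactorizationHopf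

open scoped Classical

variable (R : Type*) [CommRing R] {G : Type*} [Group G] [Fintype G] {Gp Gn : Subgroup G}
  (hF : IsExactFactorization Gp Gn)

local notation "𝓗" => FactorizationHopf R hF

noncomputable instance : AddCommGroup 𝓗 := inferInstanceAs (AddCommGroup (G → R))

noncomputable instance : Module R 𝓗 := inferInstanceAs (Module R (G → R))

noncomputable def basis : Module.Basis G R 𝓗 := Pi.basisFun R G

local notation "⟪" g "⟫" => basis R hF g

noncomputable def mulBilin : 𝓗 →ₗ[R] 𝓗 →ₗ[R] 𝓗 :=
  (basis R hF).constr R fun u => (basis R hF).constr R fun v =>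
    if fbarPlus hF u = fplus hF v then ⟪u * fminus hF v⟫ else 0

noncomputable instance : Mul 𝓗 := ⟨fun x y => mulBilin R hF x y⟩

noncomputable instance : One 𝓗 := ⟨∑ a : Gp, ⟪a⟫⟩

theorem mul_def (x y : 𝓗) : x * y = mulBilin R hF x y := rfl

theorem one_def : (1 : 𝓗) = ∑ a : Gp, ⟪a⟫ := rfl

theorem basis_mul_basis (u v : G) :
    ⟪u⟫ * ⟪v⟫ = if fbarPlus hF u = fplus hF v then ⟪u * fminus hF v⟫ else 0 := by
  rw [mul_def, mulBilin, Module.Basis.constr_basis, Module.Basis.constr_basis]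

noncomputable instance : NonUnitalNonAssocRing 𝓗 :=
  { (inferInstance : AddCommGroup 𝓗) with
    left_distrib := fun x => map_add (mulBilin R hF x)
    right_distrib := LinearMap.map_add₂ (mulBilin R hF)
    zero_mul := LinearMap.map_zero₂ (mulBilin R hF)
    mul_zero := fun x => map_zero (mulBilin R hF x) }

theorem basis_mul_assoc (u v w : G) : ⟪u⟫ * ⟪v⟫ * ⟪w⟫ = ⟪u⟫ * (⟪v⟫ * ⟪w⟫) := by
  have hp := fplus_mul_right hF (fminus_mem hF w) v
  have hm := fminus_mul_right hF (fminus_mem hF w) v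
  by_cases huv : fbarPlus hF u = fplus hF v
  · have hP := (fbarPlus_mul_fminus hF huv).1
    by_cases hvw : fbarPlus hF v = fplus hF w
    · simp [basis_mul_basis, huv, hvw, hP, hp, hm, mul_assoc]
    · simp [basis_mul_basis, huv, hvw, hP]
  · simp [basis_mul_basis, huv, hp]

theorem one_mul_basis (g : G) : 1 * ⟪g⟫ = ⟪g⟫ := by
  simp only [one_def, Finset.sum_mul, basis_mul_basis, fbarPlus_eq_self hF (SetLike.coe_mem _)]
  rw [Subgroup.sum_ite_coe_eq (fplus_mem hF g), fplus_mul_fminus]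

theorem basis_mul_one (g : G) : ⟪g⟫ * 1 = ⟪g⟫ := by
  simp only [one_def, Finset.mul_sum, basis_mul_basis, fplus_eq_self hF (SetLike.coe_mem _),
    fminus_eq_one hF (SetLike.coe_mem _), mul_one, eq_comm]
  rw [Subgroup.sum_ite_coe_eq (fbarPlus_mem hF g)]

theorem mul_assoc' (x y z : 𝓗) : x * y * z = x * (y * z) := by
  -- `(x, y) ↦ (z ↦ x * y * z)` and `(x, y) ↦ (z ↦ x * (y * z))` as bilinear maps
  have h : (mulBilin R hF).compr₂ (mulBilin R hF) =
      ((LinearMap.llcomp R 𝓗 𝓗 𝓗).comp (mulBilin R hF)).compl₂ (mulBilin R hF) :=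
    LinearMap.ext_basis (basis R hF) (basis R hF) fun u v =>
      (basis R hF).ext fun w => basis_mul_assoc R hF u v w
  exact LinearMap.congr_fun (LinearMap.congr_fun₂ h x y) z

noncomputable instance : Ring 𝓗 :=
  { (inferInstance : NonUnitalNonAssocRing 𝓗) with
    mul_assoc := mul_assoc' R hF
    one_mul := fun x => by
      change mulBilin R hF 1 x = LinearMap.id (R := R) x
      congr 1
      exact (basis R hF).ext (one_mul_basis R hF)
    mul_one := fun x => by
      change (mulBilin R hF).flip 1 x = LinearMap.id (R := R) x
      congr 1
      exact (basis R hF).ext (basis_mul_one R hF) }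

noncomputable instance : Algebra R 𝓗 :=
  Algebra.ofModule (LinearMap.map_smul₂ (mulBilin R hF)) fun r x => map_smul (mulBilin R hF x) r

open TensorProduct

noncomputable def comulMap : 𝓗 →ₗ[R] 𝓗 ⊗[R] 𝓗 :=
  (basis R hF).constr R fun g => ∑ a : Gp, ⟪comulLeft hF g a⟫ ⊗ₜ ⟪(a : G)⁻¹ * g⟫

noncomputable def counitMap : 𝓗 →ₗ[R] R :=
  (basis R hF).constr R fun g => if fplus hF g = 1 then 1 else 0

theorem comulMap_basis (g : G) :
    comulMap R hF ⟪g⟫ = ∑ a : Gp, ⟪comulLeft hF g a⟫ ⊗ₜ ⟪(a : G)⁻¹ * g⟫ :=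
  Module.Basis.constr_basis _ _ _ _

theorem counitMap_basis (g : G) : counitMap R hF ⟪g⟫ = if fplus hF g = 1 then 1 else 0 :=
  Module.Basis.constr_basis _ _ _ _

theorem coassoc_basis (g : G) :
    TensorProduct.assoc R 𝓗 𝓗 𝓗 ((comulMap R hF).rTensor 𝓗 (comulMap R hF ⟪g⟫)) =
      (comulMap R hF).lTensor 𝓗 (comulMap R hF ⟪g⟫) := by
  simp only [comulMap_basis, map_sum, LinearMap.rTensor_tmul, LinearMap.lTensor_tmul, sum_tmul,
    tmul_sum, assoc_tmul]
  rw [Finset.sum_comm]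
  refine Finset.sum_congr rfl fun c _ => Fintype.sum_equiv (Equiv.mulLeft c⁻¹) _ _ fun a => ?_
  have hk : ((c⁻¹ * a : Gp) : G)⁻¹ * ((c : G)⁻¹ * g) = (a : G)⁻¹ * g := by
    push_cast; group
  have hm : comulLeft hF (comulLeft hF g a) c = comulLeft hF g c := by
    rw [comulLeft, comulLeft_eq, ← mul_assoc, fbarMinus_mul_right hF (inv_mem (fbarPlus_mem hF _)),
      comulLeft]
  have hl : comulLeft hF ((c : G)⁻¹ * g) (c⁻¹ * a : Gp) = (c : G)⁻¹ * comulLeft hF g a := by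
    rw [comulLeft, hk, comulLeft]; push_cast; group
  simp only [Equiv.coe_mulLeft, hk, hm, hl]

theorem rTensor_counit_comul_basis (g : G) :
    (counitMap R hF).rTensor 𝓗 (comulMap R hF ⟪g⟫) = 1 ⊗ₜ ⟪g⟫ := by
  simp only [comulMap_basis, map_sum, LinearMap.rTensor_tmul, counitMap_basis,
    fplus_comulLeft hF g (SetLike.coe_mem _), ite_tmul]
  rw [Subgroup.sum_ite_coe_eq Gp.one_mem, inv_one, one_mul]

theorem lTensor_counit_comul_basis (g : G) :
    (counitMap R hF).lTensor 𝓗 (comulMap R hF ⟪g⟫) = ⟪g⟫ ⊗ₜ 1 := by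
  have hcond (a : Gp) : fplus hF ((a : G)⁻¹ * g) = 1 ↔ (a : G) = fplus hF g := by
    rw [fplus_mul_left hF (inv_mem a.2), inv_mul_eq_one]
  simp only [comulMap_basis, map_sum, LinearMap.lTensor_tmul, counitMap_basis, hcond, tmul_ite]
  rw [Subgroup.sum_ite_coe_eq (fplus_mem hF g)]
  obtain ⟨hl, -⟩ := (comulLeft_eq_and_inv_mul_eq_iff hF (fplus_mem hF g)).mpr
    ⟨rfl, fplus_mul_fminus hF g, fbarMinus_eq_self hF (fminus_mem hF g)⟩
  rw [hl]

noncomputable instance : Coalgebra R 𝓗 where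
  comul := comulMap R hF
  counit := counitMap R hF
  coassoc := (basis R hF).ext fun g => coassoc_basis R hF g
  rTensor_counit_comp_comul := (basis R hF).ext fun g => rTensor_counit_comul_basis R hF g
  lTensor_counit_comp_comul := (basis R hF).ext fun g => lTensor_counit_comul_basis R hF g

theorem counitMap_one : counitMap R hF 1 = 1 := by
  simp only [one_def, map_sum, counitMap_basis, fplus_eq_self hF (SetLike.coe_mem _)]
  exact Subgroup.sum_ite_coe_eq Gp.one_mem _

theorem counitMap_basis_mul_basis (u v : G) :
    counitMap R hF (⟪u⟫ * ⟪v⟫) = counitMap R hF ⟪u⟫ * counitMap R hF ⟪v⟫ := by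
  have hp := fplus_mul_right hF (fminus_mem hF v) u
  by_cases hu : fplus hF u = 1
  · have hP : fbarPlus hF u = 1 := (fbarPlus_eq_one_iff hF).mpr ((fplus_eq_one_iff hF).mp hu)
    by_cases hv : fplus hF v = 1 <;>
      simp [basis_mul_basis, counitMap_basis, hu, hv, hP, hp, eq_comm]
  · by_cases huv : fbarPlus hF u = fplus hF v <;>
      simp [basis_mul_basis, counitMap_basis, hu, hp, huv]

theorem comulMap_one : comulMap R hF 1 = 1 := by
  rw [one_def, map_sum, Algebra.TensorProduct.one_def, one_def, sum_tmul]
  simp only [comulMap_basis, tmul_sum]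
  rw [Finset.sum_comm]
  refine Finset.sum_congr rfl fun a _ => Fintype.sum_equiv (Equiv.mulLeft a⁻¹) _ _ fun b => ?_
  rw [comulLeft, fbarMinus_eq_one hF (mul_mem (inv_mem a.2) b.2), mul_one]
  rfl

theorem comulTerm_mul (u v : G) (a c : Gp) :
    (⟪comulLeft hF u a⟫ ⊗ₜ[R] ⟪(a : G)⁻¹ * u⟫) * (⟪comulLeft hF v c⟫ ⊗ₜ ⟪(c : G)⁻¹ * v⟫) =
      if (c : G) = fbarPlus hF u * (fbarPlus hF ((a : G)⁻¹ * u))⁻¹ then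
        if fbarPlus hF u = fplus hF v then
          ⟪comulLeft hF (u * fminus hF v) a⟫ ⊗ₜ ⟪(a : G)⁻¹ * (u * fminus hF v)⟫
        else 0
      else 0 := by
  have hm := fminus_mul_left hF (inv_mem c.2) v
  rw [Algebra.TensorProduct.tmul_mul_tmul, basis_mul_basis, basis_mul_basis, fbarPlus_comulLeft,
    fplus_comulLeft hF v c.2, fminus_comulLeft hF v c.2, hm]
  by_cases hc : (c : G) = fbarPlus hF u * (fbarPlus hF ((a : G)⁻¹ * u))⁻¹
  · have hcond : fbarPlus hF ((a : G)⁻¹ * u) = fplus hF ((c : G)⁻¹ * v) ↔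
        fbarPlus hF u = fplus hF v := by
      rw [fplus_mul_left hF (inv_mem c.2), hc, mul_inv_rev, inv_inv, mul_assoc, left_eq_mul,
        inv_mul_eq_one]
    rw [if_pos hc.symm, if_pos hc]
    by_cases huv : fbarPlus hF u = fplus hF v
    · have hM := (fbarPlus_mul_fminus hF (hcond.mpr huv)).2
      rw [hm] at hM
      rw [if_pos (hcond.mpr huv), if_pos huv, comulLeft, comulLeft, ← mul_assoc, hM, mul_assoc,
        mul_assoc]
    · rw [if_neg (mt hcond.mp huv), if_neg huv, tmul_zero]
  · rw [if_neg (Ne.symm hc), if_neg hc, zero_tmul]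

theorem comulMap_basis_mul_basis (u v : G) :
    comulMap R hF (⟪u⟫ * ⟪v⟫) = comulMap R hF ⟪u⟫ * comulMap R hF ⟪v⟫ := by
  rw [comulMap_basis, comulMap_basis, Finset.sum_mul_sum]
  simp only [comulTerm_mul,
    Subgroup.sum_ite_coe_eq (mul_mem (fbarPlus_mem hF u) (inv_mem (fbarPlus_mem hF _)))]
  rw [basis_mul_basis]
  split_ifs
  · rw [comulMap_basis]
  · rw [map_zero, Finset.sum_const_zero]

noncomputable instance : Bialgebra R 𝓗 where
  counit_one := counitMap_one R hF
  mul_compr₂_counit :=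
    LinearMap.ext_basis (basis R hF) (basis R hF) (counitMap_basis_mul_basis R hF)
  comul_one := comulMap_one R hF
  mul_compr₂_comul :=
    LinearMap.ext_basis (basis R hF) (basis R hF) (comulMap_basis_mul_basis R hF)

noncomputable def antipodeMap : 𝓗 →ₗ[R] 𝓗 := (basis R hF).constr R fun g => ⟪g⁻¹⟫

theorem antipodeMap_basis (g : G) : antipodeMap R hF ⟪g⟫ = ⟪g⁻¹⟫ :=
  Module.Basis.constr_basis _ _ _ _

theorem basis_inv_comulLeft_mul (g : G) (a : Gp) :
    ⟪(comulLeft hF g a)⁻¹⟫ * ⟪(a : G)⁻¹ * g⟫ =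
      if fplus hF g = 1 then ⟪fbarPlus hF ((a : G)⁻¹ * g)⟫ else 0 := by
  have hcond : fbarPlus hF (comulLeft hF g a)⁻¹ = fplus hF ((a : G)⁻¹ * g) ↔ fplus hF g = 1 := by
    rw [fbarPlus_inv, fplus_comulLeft hF g a.2, fplus_mul_left hF (inv_mem a.2), left_eq_mul]
  rw [basis_mul_basis]
  by_cases hg : fplus hF g = 1
  · have hm : fminus hF ((a : G)⁻¹ * g) = g := by
      rw [fminus_mul_left hF (inv_mem a.2)]
      simpa [hg] using fplus_mul_fminus hF g
    rw [if_pos (hcond.mpr hg), if_pos hg, hm, comulLeft_eq, mul_inv_rev, inv_inv,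
      inv_mul_cancel_right]
  · rw [if_neg (mt hcond.mp hg), if_neg hg]

theorem comulLeft_mul_basis_inv (g : G) (a : Gp) :
    ⟪comulLeft hF g a⟫ * ⟪((a : G)⁻¹ * g)⁻¹⟫ = if fplus hF g = 1 then ⟪(a : G)⟫ else 0 := by
  have hcond : fbarPlus hF (comulLeft hF g a) = fplus hF ((a : G)⁻¹ * g)⁻¹ ↔
      fplus hF g = 1 := by
    rw [fbarPlus_comulLeft, fplus_inv, mul_eq_right, fbarPlus_eq_one_iff, fplus_eq_one_iff]
  rw [basis_mul_basis]
  by_cases hg : fplus hF g = 1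
  · rw [if_pos (hcond.mpr hg), if_pos hg, fminus_inv, comulLeft, mul_inv_cancel_right]
  · rw [if_neg (mt hcond.mp hg), if_neg hg]

theorem mul_antipode_rTensor_comul_basis (g : G) :
    LinearMap.mul' R 𝓗 ((antipodeMap R hF).rTensor 𝓗 (comulMap R hF ⟪g⟫)) =
      algebraMap R 𝓗 (counitMap R hF ⟪g⟫) := by
  simp only [comulMap_basis, map_sum, LinearMap.rTensor_tmul, antipodeMap_basis,
    LinearMap.mul'_apply, basis_inv_comulLeft_mul, counitMap_basis]
  by_cases hg : fplus hF g = 1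
  · simp only [if_pos hg, map_one, one_def]
    exact Equiv.sum_comp (fbarPlusPerm hF g) fun c : Gp => ⟪(c : G)⟫
  · simp only [if_neg hg, map_zero, Finset.sum_const_zero]

theorem mul_antipode_lTensor_comul_basis (g : G) :
    LinearMap.mul' R 𝓗 ((antipodeMap R hF).lTensor 𝓗 (comulMap R hF ⟪g⟫)) =
      algebraMap R 𝓗 (counitMap R hF ⟪g⟫) := by
  simp only [comulMap_basis, map_sum, LinearMap.lTensor_tmul, antipodeMap_basis,
    LinearMap.mul'_apply, comulLeft_mul_basis_inv, counitMap_basis]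
  by_cases hg : fplus hF g = 1
  · simp only [if_pos hg, map_one, one_def]
  · simp only [if_neg hg, map_zero, Finset.sum_const_zero]

noncomputable instance : HopfAlgebra R 𝓗 where
  antipode := antipodeMap R hF
  mul_antipode_rTensor_comul := (basis R hF).ext (mul_antipode_rTensor_comul_basis R hF)
  mul_antipode_lTensor_comul := (basis R hF).ext (mul_antipode_lTensor_comul_basis R hF)

theorem counit_basis (g : G) :
    Coalgebra.counit (R := R) ⟪g⟫ = if fplus hF g = 1 then 1 else 0 :=
  counitMap_basis R hF g

theorem antipode_basis (g : G) : HopfAlgebra.antipode R ⟪g⟫ = ⟪g⁻¹⟫ :=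
  antipodeMap_basis R hF g

theorem repr_one (g : G) : (basis R hF).repr 1 g = if g ∈ Gp then 1 else 0 := by
  rw [one_def, map_sum, Finsupp.coe_finsetSum, Finset.sum_apply]
  simp only [Module.Basis.repr_self_apply]
  split_ifs with hg
  · exact Subgroup.sum_ite_coe_eq hg _
  · exact Finset.sum_eq_zero fun a _ => if_neg fun h : (a : G) = g => hg (h ▸ a.2)

theorem repr_comul_basis (g h k : G) :
    ((basis R hF).tensorProduct (basis R hF)).repr (Coalgebra.comul (R := R) ⟪g⟫) (h, k) =
      if fplus hF h * k = g ∧ fbarMinus hF k = fminus hF h then 1 else 0 := by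
  change ((basis R hF).tensorProduct (basis R hF)).repr (comulMap R hF ⟪g⟫) (h, k) = _
  rw [comulMap_basis, map_sum, Finsupp.coe_finsetSum, Finset.sum_apply]
  simp only [Module.Basis.tensorProduct_repr_tmul_apply, Module.Basis.repr_self_apply, smul_eq_mul,
    ite_zero_mul_ite_zero, mul_one, and_comm (a := _ = k),
    comulLeft_eq_and_inv_mul_eq_iff hF (SetLike.coe_mem _), ite_and]
  exact Subgroup.sum_ite_coe_eq (fplus_mem hF h) _

theorem isPositiveBasis : IsPositiveBasis (basis ℂ hF) where
  one_nonneg g := by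
    rw [repr_one]
    exact ite_nonneg zero_le_one le_rfl
  counit_nonneg g := by
    rw [counit_basis]
    exact ite_nonneg zero_le_one le_rfl
  mul_nonneg u v w := by
    rw [basis_mul_basis]
    split_ifs
    · rw [Module.Basis.repr_self_apply]
      exact ite_nonneg zero_le_one le_rfl
    · rw [map_zero, Finsupp.zero_apply]
  comul_nonneg g h k := by
    rw [repr_comul_basis]
    exact ite_nonneg zero_le_one le_rfl
  antipode_nonneg g h := by
    rw [antipode_basis, Module.Basis.repr_self_apply]
    exact ite_nonneg zero_le_one le_rfl

end FactorizationHopf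

theorem stmt0 (G : Type) [Group G] [Fintype G] (Gp Gn : Subgroup G)
    (hF : IsExactFactorization Gp Gn) :
    ∃ (A : HopfAlgebraOver) (B : Module.Basis G ℂ A.carrier),
      IsPositiveBasis B ∧
      (∀ g h : G, fbarPlus hF g = fplus hF h → B g * B h = B (g * fminus hF h)) ∧
      (∀ g h : G, fbarPlus hF g ≠ fplus hF h → B g * B h = 0) ∧
      (∀ g h k : G, fplus hF h * k = g ∧ fbarMinus hF k = fminus hF h →
        (B.tensorProduct B).repr (Coalgebra.comul (R := ℂ) (B g)) (h, k) = 1) ∧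
      (∀ g h k : G, ¬(fplus hF h * k = g ∧ fbarMinus hF k = fminus hF h) →
        (B.tensorProduct B).repr (Coalgebra.comul (R := ℂ) (B g)) (h, k) = 0) ∧
      (∀ g : G, g ∈ Gp → B.repr 1 g = 1) ∧
      (∀ g : G, g ∉ Gp → B.repr 1 g = 0) ∧
      (∀ g : G, fplus hF g = 1 → Coalgebra.counit (R := ℂ) (B g) = 1) ∧
      (∀ g : G, fplus hF g ≠ 1 → Coalgebra.counit (R := ℂ) (B g) = 0) ∧
      (∀ g : G, HopfAlgebra.antipode (R := ℂ) (B g) = B g⁻¹) := by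
  open FactorizationHopf in
  refine ⟨⟨FactorizationHopf ℂ hF⟩, basis ℂ hF, isPositiveBasis hF,
    fun g h hc => ?_, fun g h hc => ?_, fun g h k hc => ?_, fun g h k hc => ?_,
    fun g hg => ?_, fun g hg => ?_, fun g hg => ?_, fun g hg => ?_, antipode_basis ℂ hF⟩
  · rw [basis_mul_basis, if_pos hc]
  · rw [basis_mul_basis, if_neg hc]
  · rw [repr_comul_basis, if_pos hc]
  · rw [repr_comul_basis, if_neg hc]
  · rw [repr_one, if_pos hg]
  · rw [repr_one, if_neg hg]
  · rw [counit_basis, if_pos hg]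
  · rw [counit_basis, if_neg hg]
end

section
/- Let H be a finite-dimensional Hopf algebra over ℂ with a positive basis B, and suppose 1 = d₁ + ⋯ + d_k where d₁, …, d_k are distinct elements of B. Then d_i d_j = δ_{ij} d_i for all i, j, and the linear span ℂd₁ + ⋯ + ℂd_k is a commutative Hopf subalgebra of H (it is closed under multiplication, comultiplication, and the antipode, and contains the unit). -/
open scoped TensorProduct ComplexOrder

/-!
A sum of vectors with nonnegative coordinates lies in the span of a set of basis vectors only if
every summand does. Apply this to `∑ᵢ dᵢ dⱼ = dⱼ`, `∑ⱼ dᵢ dⱼ = dᵢ`, `∑ᵢ Δ dᵢ = Δ 1 = 1 ⊗ 1 =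
∑ᵢⱼ dᵢ ⊗ dⱼ` and `∑ᵢ S dᵢ = S 1 = 1`: so `dᵢ dⱼ` is a multiple of both `dᵢ` and `dⱼ`, hence `0`
for `i ≠ j`, whence `dᵢ = dᵢ · 1 = dᵢ²`; and `Δ dᵢ` lies in the span of the `dⱼ ⊗ dₗ`, `S dᵢ` in
that of the `dⱼ`.
-/

section PositiveCone

variable {R M κ α : Type*} [Semiring R] [PartialOrder R] [IsOrderedAddMonoid R]
  [AddCommMonoid M] [Module R M]

theorem Module.Basis.mem_span_image_of_sum_mem (C : Module.Basis κ R M) {v : α → M}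
    (hv : ∀ a j, 0 ≤ C.repr (v a) j) {s : Finset α} {S : Set κ}
    (hsum : ∑ a ∈ s, v a ∈ Submodule.span R (C '' S)) {a : α} (ha : a ∈ s) :
    v a ∈ Submodule.span R (C '' S) := by
  classical
  rw [C.mem_span_image] at hsum ⊢
  intro j hj
  by_contra hjS
  have hzero : ∑ b ∈ s, C.repr (v b) j = 0 := by
    simpa [map_sum] using Finsupp.notMem_support_iff.mp (fun h => hjS (hsum h))
  exact Finsupp.mem_support_iff.mp hj <|
    (Finset.sum_eq_zero_iff_of_nonneg fun b _ => hv b j).mp hzero a ha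

end PositiveCone

section SpanClosure

variable {R A : Type*} [CommSemiring R] [Semiring A] [Algebra R A] {s : Set A}

theorem Submodule.mul_mem_span_of_mul_mem (hs : ∀ a ∈ s, ∀ b ∈ s, a * b ∈ span R s)
    {x y : A} (hx : x ∈ span R s) (hy : y ∈ span R s) : x * y ∈ span R s := by
  have hle : span R s * span R s ≤ span R s := by
    rw [span_mul_span, span_le]
    rintro _ ⟨a, ha, b, hb, rfl⟩
    exact hs a ha b hb
  exact hle (mul_mem_mul hx hy)

theorem Submodule.commute_of_mem_span (hs : ∀ a ∈ s, ∀ b ∈ s, Commute a b)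
    {x y : A} (hx : x ∈ span R s) (hy : y ∈ span R s) : Commute x y :=
  Commute.span_left (fun a ha => Commute.span_right (hs a ha) y hy) x hx

end SpanClosure

namespace IsPositiveBasis

variable {H : Type*} [Ring H] [HopfAlgebra ℂ H] {ι : Type*} {B : Module.Basis ι ℂ H}
  {D : Finset ι}

theorem mul_mem_span_right (hpos : IsPositiveBasis B) (h1 : (1 : H) = ∑ m ∈ D, B m)
    {m : ι} (hm : m ∈ D) (n : ι) : B m * B n ∈ Submodule.span ℂ (B '' {n}) := by
  refine B.mem_span_image_of_sum_mem (fun m => hpos.mul_nonneg m n) ?_ hm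
  rw [← Finset.sum_mul, ← h1, one_mul, Set.image_singleton]
  exact Submodule.mem_span_singleton_self _

theorem mul_mem_span_left (hpos : IsPositiveBasis B) (h1 : (1 : H) = ∑ m ∈ D, B m)
    (m : ι) {n : ι} (hn : n ∈ D) : B m * B n ∈ Submodule.span ℂ (B '' {m}) := by
  refine B.mem_span_image_of_sum_mem (v := fun n => B m * B n) (fun n => hpos.mul_nonneg m n)
    ?_ hn
  rw [← Finset.mul_sum, ← h1, mul_one, Set.image_singleton]
  exact Submodule.mem_span_singleton_self _

theorem mul_eq_zero_of_ne (hpos : IsPositiveBasis B) (h1 : (1 : H) = ∑ m ∈ D, B m)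
    {m n : ι} (hm : m ∈ D) (hn : n ∈ D) (hmn : m ≠ n) : B m * B n = 0 :=
  Submodule.disjoint_def.mp
    (B.linearIndependent.disjoint_span_image (Set.disjoint_singleton.mpr hmn)) _
    (hpos.mul_mem_span_left h1 m hn) (hpos.mul_mem_span_right h1 hm n)

theorem mul_self (hpos : IsPositiveBasis B) (h1 : (1 : H) = ∑ m ∈ D, B m)
    {m : ι} (hm : m ∈ D) : B m * B m = B m := by
  calc B m * B m = ∑ n ∈ D, B m * B n :=
        (Finset.sum_eq_single_of_mem m hm
          fun n hn hnm => hpos.mul_eq_zero_of_ne h1 hm hn (Ne.symm hnm)).symm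
    _ = B m := by rw [← Finset.mul_sum, ← h1, mul_one]

theorem comul_mem_span (hpos : IsPositiveBasis B) (h1 : (1 : H) = ∑ m ∈ D, B m)
    {m : ι} (hm : m ∈ D) :
    Coalgebra.comul (R := ℂ) (B m) ∈ Submodule.span ℂ (B.tensorProduct B '' (D ×ˢ D)) := by
  refine (B.tensorProduct B).mem_span_image_of_sum_mem
    (v := fun m => Coalgebra.comul (R := ℂ) (B m))
    (fun m p => hpos.comul_nonneg m p.1 p.2) ?_ hm
  rw [← map_sum, ← h1, Bialgebra.comul_one, Algebra.TensorProduct.one_def, h1,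
    TensorProduct.sum_tmul]
  refine Submodule.sum_mem _ fun p hp => ?_
  rw [TensorProduct.tmul_sum]
  exact Submodule.sum_mem _ fun q hq =>
    Submodule.subset_span ⟨(p, q), ⟨hp, hq⟩, B.tensorProduct_apply B p q⟩

theorem one_mem_span (h1 : (1 : H) = ∑ m ∈ D, B m) : (1 : H) ∈ Submodule.span ℂ (B '' D) :=
  h1 ▸ Submodule.sum_mem _ fun m hm => Submodule.subset_span ⟨m, hm, rfl⟩

theorem antipode_mem_span (hpos : IsPositiveBasis B) (h1 : (1 : H) = ∑ m ∈ D, B m)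
    {m : ι} (hm : m ∈ D) :
    HopfAlgebra.antipode ℂ (B m) ∈ Submodule.span ℂ (B '' D) := by
  refine B.mem_span_image_of_sum_mem (v := fun m => HopfAlgebra.antipode ℂ (B m))
    (fun m => hpos.antipode_nonneg m) ?_ hm
  rw [← map_sum, ← h1, HopfAlgebra.antipode_one]
  exact one_mem_span h1

theorem mul_mem_span (hpos : IsPositiveBasis B) (h1 : (1 : H) = ∑ m ∈ D, B m)
    {x y : H} (hx : x ∈ Submodule.span ℂ (B '' D)) (hy : y ∈ Submodule.span ℂ (B '' D)) :
    x * y ∈ Submodule.span ℂ (B '' D) := by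
  refine Submodule.mul_mem_span_of_mul_mem ?_ hx hy
  rintro _ ⟨m, hm, rfl⟩ _ ⟨n, hn, rfl⟩
  by_cases hmn : m = n
  · rw [← hmn, hpos.mul_self h1 hm]
    exact Submodule.subset_span ⟨m, hm, rfl⟩
  · rw [hpos.mul_eq_zero_of_ne h1 hm hn hmn]
    exact Submodule.zero_mem _

theorem commute_of_mem_span (hpos : IsPositiveBasis B) (h1 : (1 : H) = ∑ m ∈ D, B m)
    {x y : H} (hx : x ∈ Submodule.span ℂ (B '' D)) (hy : y ∈ Submodule.span ℂ (B '' D)) :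
    Commute x y := by
  refine Submodule.commute_of_mem_span ?_ hx hy
  rintro _ ⟨m, hm, rfl⟩ _ ⟨n, hn, rfl⟩
  by_cases hmn : m = n
  · rw [hmn]
  · rw [Commute, SemiconjBy, hpos.mul_eq_zero_of_ne h1 hm hn hmn,
      hpos.mul_eq_zero_of_ne h1 hn hm (Ne.symm hmn)]

theorem comul_mem_range_of_mem_span (hpos : IsPositiveBasis B)
    (h1 : (1 : H) = ∑ m ∈ D, B m) {x : H} (hx : x ∈ Submodule.span ℂ (B '' D)) :
    let W := Submodule.span ℂ (B '' D)
    Coalgebra.comul (R := ℂ) x ∈ LinearMap.range (TensorProduct.map W.subtype W.subtype) := by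
  intro W
  have hgen : ∀ m ∈ D, B m ∈ W := fun m hm => Submodule.subset_span ⟨m, hm, rfl⟩
  have hgrid : Submodule.span ℂ (B.tensorProduct B '' (D ×ˢ D)) ≤
      LinearMap.range (TensorProduct.map W.subtype W.subtype) := by
    rw [Submodule.span_le]
    rintro _ ⟨⟨m, n⟩, hmn, rfl⟩
    exact ⟨⟨B m, hgen m hmn.1⟩ ⊗ₜ ⟨B n, hgen n hmn.2⟩, (B.tensorProduct_apply B m n).symm⟩
  have hle : W ≤ (LinearMap.range (TensorProduct.map W.subtype W.subtype)).comap
      (Coalgebra.comul (R := ℂ)) := by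
    rw [Submodule.span_le]
    rintro _ ⟨m, hm, rfl⟩
    exact hgrid (hpos.comul_mem_span h1 hm)
  exact hle hx

theorem antipode_mem_span_of_mem_span (hpos : IsPositiveBasis B)
    (h1 : (1 : H) = ∑ m ∈ D, B m) {x : H} (hx : x ∈ Submodule.span ℂ (B '' D)) :
    HopfAlgebra.antipode ℂ x ∈ Submodule.span ℂ (B '' D) := by
  have hle : Submodule.span ℂ (B '' D) ≤
      (Submodule.span ℂ (B '' D)).comap (HopfAlgebra.antipode ℂ) := by
    rw [Submodule.span_le]
    rintro _ ⟨m, hm, rfl⟩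
    exact hpos.antipode_mem_span h1 hm
  exact hle hx

end IsPositiveBasis

theorem stmt4_general {H : Type} [Ring H] [HopfAlgebra ℂ H] {ι : Type}
    (B : Module.Basis ι ℂ H) (hpos : IsPositiveBasis B)
    (k : ℕ) (d : Fin k → ι) (hd : Function.Injective d)
    (h1 : (1 : H) = ∑ i : Fin k, B (d i)) :
    -- dᵢdⱼ = δᵢⱼ dᵢ
    (∀ i j : Fin k, B (d i) * B (d j) = if i = j then B (d i) else 0) ∧
    -- ℂd₁ + ⋯ + d_k is a commutative Hopf subalgebra
    (let W : Submodule ℂ H := Submodule.span ℂ (Set.range fun i : Fin k => B (d i))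
     (1 : H) ∈ W ∧
     (∀ x ∈ W, ∀ y ∈ W, x * y ∈ W) ∧
     (∀ x ∈ W, ∀ y ∈ W, x * y = y * x) ∧
     (∀ x ∈ W, Coalgebra.comul (R := ℂ) x ∈
        LinearMap.range (TensorProduct.map W.subtype W.subtype)) ∧
     (∀ x ∈ W, HopfAlgebra.antipode (R := ℂ) x ∈ W)) := by
  classical
  set D := Finset.univ.image d
  have hD : (1 : H) = ∑ m ∈ D, B m := by rw [Finset.sum_image fun i _ j _ h => hd h, h1]
  have hdD : ∀ i, d i ∈ D := fun i => Finset.mem_image_of_mem d (Finset.mem_univ i)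
  have hrange : Set.range (fun i => B (d i)) = B '' D := by
    rw [Finset.coe_image, Finset.coe_univ, Set.image_univ, ← Set.range_comp]
    rfl
  refine ⟨fun i j => ?_, ?_⟩
  · split_ifs with hij
    · rw [hij, hpos.mul_self hD (hdD j)]
    · exact hpos.mul_eq_zero_of_ne hD (hdD i) (hdD j) (hd.ne hij)
  · dsimp only
    rw [hrange]
    exact ⟨IsPositiveBasis.one_mem_span hD, fun x hx y hy => hpos.mul_mem_span hD hx hy,
      fun x hx y hy => hpos.commute_of_mem_span hD hx hy,
      fun x hx => hpos.comul_mem_range_of_mem_span hD hx,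
      fun x hx => hpos.antipode_mem_span_of_mem_span hD hx⟩

theorem stmt4 {H : Type} [Ring H] [HopfAlgebra ℂ H] {ι : Type} [Fintype ι]
    (B : Module.Basis ι ℂ H) (hpos : IsPositiveBasis B)
    (k : ℕ) (d : Fin k → ι) (hd : Function.Injective d)
    (h1 : (1 : H) = ∑ i : Fin k, B (d i)) :
    -- dᵢdⱼ = δᵢⱼ dᵢ
    (∀ i j : Fin k, B (d i) * B (d j) = if i = j then B (d i) else 0) ∧
    -- ℂd₁ + ⋯ + d_k is a commutative Hopf subalgebra
    (let W : Submodule ℂ H := Submodule.span ℂ (Set.range fun i : Fin k => B (d i))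
     (1 : H) ∈ W ∧
     (∀ x ∈ W, ∀ y ∈ W, x * y ∈ W) ∧
     (∀ x ∈ W, ∀ y ∈ W, x * y = y * x) ∧
     (∀ x ∈ W, Coalgebra.comul (R := ℂ) x ∈
        LinearMap.range (TensorProduct.map W.subtype W.subtype)) ∧
     (∀ x ∈ W, HopfAlgebra.antipode (R := ℂ) x ∈ W)) :=
  stmt4_general B hpos k d hd h1
end

section
/- Let H be a finite-dimensional Hopf algebra over ℂ with a positive basis B, and suppose 1 = d₁ + ⋯ + d_k where d₁, …, d_k are distinct elements of B. Then there is a finite group G₊ of order k and a bijection g₊ ↦ d_{g₊} from G₊ onto {d₁, …, d_k} such that d_{g₊} d_{h₊} = δ_{g₊,h₊} d_{g₊}, Δ(d_{g₊}) = Σ_{h₊k₊ = g₊} d_{h₊} ⊗ d_{k₊}, S(d_{g₊}) = d_{g₊⁻¹}, 1 = Σ_{g₊∈G₊} d_{g₊}, and ε(d_{g₊}) = δ_{g₊,e}; that is, the span of d₁, …, d_k is isomorphic as a Hopf algebra to the dual (ℂG₊)* of the group algebra of G₊, with the d's corresponding to the dual basis of G₊. -/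
open scoped TensorProduct ComplexOrder

/-- A finite group, bundled. -/
structure FinGrp : Type 1 where
  carrier : Type
  [grp : Group carrier]
  [fin : Fintype carrier]

attribute [instance] FinGrp.grp FinGrp.fin

/-!
Positivity of the structure constants forces the summands `d i` of `1` to be orthogonal
idempotents: all coordinates in `∑ i, d i * d j = d j` and `∑ j, d i * d j = d i` are
nonnegative, so `d i * d j` is supported on `{d i} ∩ {d j}`. In the same way
`∑ l, Δ (d l) = 1 ⊗ 1 = ∑ a b, d a ⊗ d b` pushes every `Δ (d l)` into the span of the
`d a ⊗ d b`. Multiplicativity of `Δ` then says that, for fixed `a b`, the coefficients of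
`Δ (d l)` at `d a ⊗ d b` form a complete family of orthogonal idempotents of the field, i.e.
the indicator of a single index `l =: a * b`. Coassociativity makes this product
associative, the counit (an algebra map, hence again an indicator) singles out a left unit,
and the antipode axiom for `Δ (d 1)` provides left inverses. In the resulting group the
antipode axiom reads `S (d a) * d c = δ_{a c, 1} d c`, whence `S (d a) = d a⁻¹`.
-/

open Module

section Basis

variable {R ι κ : Type*} [Fintype κ]

theorem Module.Basis.repr_eq_zero_of_repr_sum_eq_zero [Semiring R] [PartialOrder R] [AddLeftMono R]
    {M : Type*} [AddCommMonoid M] [Module R M] (b : Basis ι R M) {x : κ → M}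
    (hx : ∀ l p, 0 ≤ b.repr (x l) p) {p : ι} (h : b.repr (∑ l, x l) p = 0) (l : κ) :
    b.repr (x l) p = 0 := by
  rw [map_sum, Finsupp.finsetSum_apply] at h
  exact (Finset.sum_eq_zero_iff_of_nonneg fun l _ => hx l p).mp h l (Finset.mem_univ l)

theorem Module.Basis.repr_sum_apply_eq_zero [Semiring R] {M : Type*} [AddCommMonoid M] [Module R M]
    (b : Basis ι R M) (d : κ → ι) {p : ι} (hp : p ∉ Set.range d) :
    b.repr (∑ i, b (d i)) p = 0 := by
  classical
  simp only [map_sum, Basis.repr_self, Finsupp.finsetSum_apply, Finsupp.single_apply]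
  exact Finset.sum_eq_zero fun i _ => if_neg fun h => hp ⟨i, h⟩

variable [CommSemiring R] {A : Type*} [Semiring A] [Algebra R A]

theorem Module.Basis.completeOrthogonalIdempotents_of_mul_nonneg [PartialOrder R] [AddLeftMono R]
    (b : Basis ι R A) {d : κ → ι} (hd : Function.Injective d)
    (hmul : ∀ i j k, 0 ≤ b.repr (b i * b j) k) (h1 : (1 : A) = ∑ i, b (d i)) :
    CompleteOrthogonalIdempotents fun i => b (d i) := by
  classical
  have repr_basis (j : κ) (p : ι) (hp : p ≠ d j) : b.repr (b (d j)) p = 0 := by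
    simp [hp.symm]
  have supp_right (i j : κ) (p : ι) (hp : p ≠ d j) : b.repr (b (d i) * b (d j)) p = 0 :=
    b.repr_eq_zero_of_repr_sum_eq_zero (x := fun i => b (d i) * b (d j)) (fun _ _ => hmul _ _ _)
      (by rw [← Finset.sum_mul, ← h1, one_mul]; exact repr_basis j p hp) i
  have supp_left (i j : κ) (p : ι) (hp : p ≠ d i) : b.repr (b (d i) * b (d j)) p = 0 :=
    b.repr_eq_zero_of_repr_sum_eq_zero (x := fun j => b (d i) * b (d j)) (fun _ _ => hmul _ _ _)
      (by rw [← Finset.mul_sum, ← h1, mul_one]; exact repr_basis i p hp) j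
  have ortho : Pairwise fun i j => b (d i) * b (d j) = 0 := fun i j hij =>
    b.ext_elem fun p => by
      rw [map_zero, Finsupp.zero_apply]
      by_cases hp : p = d i
      · exact supp_right i j p (hp ▸ fun h => hij (hd h))
      · exact supp_left i j p hp
  refine ⟨⟨fun i => ?_, ortho⟩, h1.symm⟩
  calc b (d i) * b (d i) = ∑ i', b (d i') * b (d i) :=
        (Finset.sum_eq_single i (fun i' _ hi' => ortho hi') (by simp)).symm
    _ = b (d i) := by rw [← Finset.sum_mul, ← h1, one_mul]

theorem Module.Basis.mul_eq_repr_smul_of_repr_eq_zero [Fintype ι] (b : Basis ι R A)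
    {d : κ → ι} (he : OrthogonalIdempotents fun i => b (d i)) {x : A}
    (hx : ∀ p ∉ Set.range d, b.repr x p = 0) (a : κ) :
    x * b (d a) = b.repr x (d a) • b (d a) := by
  conv_lhs => rw [← b.sum_repr x]
  rw [Finset.sum_mul, Finset.sum_eq_single (d a)]
  · rw [smul_mul_assoc, (he.idem a).eq]
  · intro p _ hpa
    by_cases hp : p ∈ Set.range d
    · obtain ⟨a', rfl⟩ := hp
      rw [smul_mul_assoc, he.ortho (fun h => hpa (congrArg d h)), smul_zero]
    · simp [hx p hp]
  · simp

end Basis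

section Idempotents

theorem CompleteOrthogonalIdempotents.tmul {R A B I J : Type*} [CommSemiring R] [Semiring A]
    [Algebra R A] [Semiring B] [Algebra R B] [Fintype I] [Fintype J] {e : I → A} {f : J → B}
    (he : CompleteOrthogonalIdempotents e) (hf : CompleteOrthogonalIdempotents f) :
    CompleteOrthogonalIdempotents fun p : I × J => e p.1 ⊗ₜ[R] f p.2 := by
  refine ⟨⟨fun p => ?_, fun p q hpq => ?_⟩, ?_⟩
  · simp only [IsIdempotentElem, Algebra.TensorProduct.tmul_mul_tmul, (he.idem _).eq,
      (hf.idem _).eq]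
  · simp only [Algebra.TensorProduct.tmul_mul_tmul]
    by_cases h : p.1 = q.1
    · rw [hf.ortho fun h' => hpq (Prod.ext h h'), TensorProduct.tmul_zero]
    · rw [he.ortho h, TensorProduct.zero_tmul]
  · rw [Fintype.sum_prod_type, Algebra.TensorProduct.one_def, ← he.complete, ← hf.complete,
      TensorProduct.sum_tmul]
    simp only [TensorProduct.tmul_sum]

theorem CompleteOrthogonalIdempotents.exists_eq_ite {R I : Type*} [Ring R] [IsDomain R]
    [Fintype I] [DecidableEq I] {v : I → R} (hv : CompleteOrthogonalIdempotents v) :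
    ∃ u, ∀ i, v i = if i = u then 1 else 0 := by
  obtain ⟨u, -, hu⟩ := Finset.exists_ne_zero_of_sum_ne_zero (hv.complete ▸ one_ne_zero)
  have hu1 : v u = 1 := (IsIdempotentElem.iff_eq_zero_or_one.mp (hv.idem u)).resolve_left hu
  refine ⟨u, fun i => ?_⟩
  split_ifs with hi
  · rw [hi, hu1]
  · simpa [hu] using hv.ortho hi

theorem CompleteOrthogonalIdempotents.of_mul_eq_smul {R A I : Type*} [Field R] [Ring A]
    [Algebra R A] [Fintype I] {X : I → A} (hX : CompleteOrthogonalIdempotents X) {E : A}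
    (hE : E ≠ 0) {v : I → R} (hv : ∀ i, X i * E = v i • E) :
    CompleteOrthogonalIdempotents v := by
  classical
  refine ⟨OrthogonalIdempotents.iff_mul_eq.mpr fun i j => smul_left_injective R hE ?_, ?_⟩
  · dsimp only
    rw [mul_smul, ← hv j, ← mul_smul_comm, ← hv i, ← mul_assoc, hX.mul_eq]
    rcases eq_or_ne i j with rfl | hij
    · simp [hv]
    · simp [hij, hij.symm]
  · refine smul_left_injective R hE ?_
    dsimp only
    rw [Finset.sum_smul, one_smul]
    simp only [← hv, ← Finset.sum_mul, hX.complete, one_mul]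

end Idempotents

theorem TensorProduct.tmul_ne_zero {K M N : Type*} [Field K] [AddCommGroup M] [Module K M]
    [AddCommGroup N] [Module K N] {x : M} {y : N} (hx : x ≠ 0) (hy : y ≠ 0) :
    x ⊗ₜ[K] y ≠ 0 :=
  ((linearIndependent_unique_iff (v := fun _ : Unit => x)).mpr hx).tmul_of_isDomain
    ((linearIndependent_unique_iff (v := fun _ : Unit => y)).mpr hy) |>.ne_zero ((), ())

theorem LinearMap.mul'_rTensor_mul_one_tmul {R A : Type*} [CommSemiring R] [Semiring A]
    [Algebra R A] (f : A →ₗ[R] A) (x : A ⊗[R] A) (c : A) :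
    LinearMap.mul' R A (f.rTensor A (x * (1 ⊗ₜ c))) = LinearMap.mul' R A (f.rTensor A x) * c := by
  induction x using TensorProduct.induction_on with
  | zero => simp
  | tmul a b => simp [mul_assoc]
  | add x y hx hy => simp only [add_mul, map_add, hx, hy]

/-- `Δ (e l) = ∑_{μ a b = l} e a ⊗ e b`, stated as: `Δ (e l)` acts on each `e a ⊗ e b` by the
indicator of `μ a b = l` (equivalent when the `e i` are complete orthogonal idempotents). -/
def IsComulDualToMul (R : Type*) {H κ : Type*} [CommSemiring R] [Semiring H] [Bialgebra R H]
    [DecidableEq κ] (e : κ → H) (μ : κ → κ → κ) : Prop :=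
  ∀ l a b, Coalgebra.comul (R := R) (e l) * (e a ⊗ₜ[R] e b) =
    if μ a b = l then e a ⊗ₜ[R] e b else 0

theorem IsComulDualToMul.comul_mul_tmul {R H κ : Type*} [CommSemiring R] [Semiring H]
    [Bialgebra R H] [DecidableEq κ] {e : κ → H} {μ : κ → κ → κ} (hμ : IsComulDualToMul R e μ)
    (l a b : κ) :
    Coalgebra.comul (R := R) (e l) * (e a ⊗ₜ[R] e b) = if μ a b = l then e a ⊗ₜ[R] e b else 0 :=
  hμ l a b

section Bialgebra

variable {R H ι κ : Type*} [Field R] [Ring H] [Bialgebra R H] [Fintype κ] [DecidableEq κ]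

theorem Module.Basis.exists_isComulDualToMul [Fintype ι] [PartialOrder R] [AddLeftMono R]
    (B : Basis ι R H) {d : κ → ι} (he : CompleteOrthogonalIdempotents fun i => B (d i))
    (hcomul : ∀ i j k, 0 ≤ (B.tensorProduct B).repr (Coalgebra.comul (R := R) (B i)) (j, k)) :
    ∃ μ, IsComulDualToMul R (fun i => B (d i)) μ := by
  set B₂ := B.tensorProduct B
  have he₂ : CompleteOrthogonalIdempotents fun p : κ × κ => B₂ (Prod.map d d p) := by
    simpa only [B₂, Basis.tensorProduct_apply', Prod.map_fst, Prod.map_snd] using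
      he.tmul (R := R) he
  -- the `Δ (B (d l))` have nonnegative coordinates and sum to `Δ 1 = ∑ B (d a) ⊗ B (d b)`
  have hsupp (l : κ) : ∀ p ∉ Set.range (Prod.map d d),
      B₂.repr (Coalgebra.comul (R := R) (B (d l))) p = 0 := fun p hp =>
    B₂.repr_eq_zero_of_repr_sum_eq_zero (x := fun l => Coalgebra.comul (R := R) (B (d l)))
      (fun _ p => hcomul _ p.1 p.2)
      (by rw [← map_sum, he.complete, Bialgebra.comul_one, ← he₂.complete]
          exact B₂.repr_sum_apply_eq_zero _ hp) l
  have hcoord (a b : κ) : ∃ u, ∀ l,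
      B₂.repr (Coalgebra.comul (R := R) (B (d l))) (d a, d b) = if l = u then 1 else 0 :=
    CompleteOrthogonalIdempotents.exists_eq_ite <|
      (he.map (Bialgebra.comulAlgHom R H).toRingHom).of_mul_eq_smul (B₂.ne_zero (d a, d b))
        fun l => B₂.mul_eq_repr_smul_of_repr_eq_zero he₂.toOrthogonalIdempotents (hsupp l) (a, b)
  choose μ hμ using hcoord
  refine ⟨μ, fun l a b => ?_⟩
  have hact := B₂.mul_eq_repr_smul_of_repr_eq_zero he₂.toOrthogonalIdempotents (hsupp l) (a, b)
  simp only [Prod.map, B₂, Basis.tensorProduct_apply] at hact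
  rw [hact, hμ]
  by_cases h : μ a b = l <;> simp [h, Ne.symm]

variable {e : κ → H} {μ : κ → κ → κ}

theorem IsComulDualToMul.comul_eq_sum (hμ : IsComulDualToMul R e μ)
    (he : CompleteOrthogonalIdempotents e) (l : κ) :
    Coalgebra.comul (R := R) (e l) = ∑ a, ∑ b, if μ a b = l then e a ⊗ₜ[R] e b else 0 := by
  calc Coalgebra.comul (R := R) (e l)
      = Coalgebra.comul (R := R) (e l) * ((∑ a, e a) ⊗ₜ[R] (∑ b, e b)) := by
        rw [he.complete, ← Algebra.TensorProduct.one_def, mul_one]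
    _ = _ := by
      rw [TensorProduct.sum_tmul]
      simp only [TensorProduct.tmul_sum, Finset.mul_sum, hμ.comul_mul_tmul]

theorem exists_counit_eq_ite (he : CompleteOrthogonalIdempotents e) :
    ∃ u, ∀ g, Coalgebra.counit (R := R) (e g) = if g = u then 1 else 0 :=
  (he.map (Bialgebra.counitAlgHom R H).toRingHom).exists_eq_ite

theorem IsComulDualToMul.one_mul (hμ : IsComulDualToMul R e μ)
    (he : CompleteOrthogonalIdempotents e) (he₀ : ∀ i, e i ≠ 0) {u : κ}
    (hu : ∀ g, Coalgebra.counit (R := R) (e g) = if g = u then 1 else 0) (b : κ) :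
    μ u b = b := by
  let Φ : H ⊗[R] H →ₐ[R] H := (Algebra.TensorProduct.lid R H).toAlgHom.comp
    (Algebra.TensorProduct.map (Bialgebra.counitAlgHom R H) (AlgHom.id R H))
  have hΦ (x : H) : Φ (Coalgebra.comul (R := R) x) = x := by
    have := congrArg (TensorProduct.lid R H) (Coalgebra.rTensor_counit_comul (R := R) x)
    rwa [TensorProduct.lid_tmul, one_smul] at this
  have hΦe : Φ (e u ⊗ₜ e b) = e b := by simp [Φ, hu]
  have h := congrArg Φ (hμ b u b)
  rw [map_mul, hΦ, hΦe, (he.idem b).eq, apply_ite Φ, hΦe, map_zero] at h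
  by_contra hne
  rw [if_neg hne] at h
  exact he₀ b h

theorem IsComulDualToMul.mul_assoc (hμ : IsComulDualToMul R e μ)
    (he : CompleteOrthogonalIdempotents e) (he₀ : ∀ i, e i ≠ 0) (p q r : κ) :
    μ (μ p q) r = μ p (μ q r) := by
  let Ψ₁ : H ⊗[R] H →ₐ[R] H ⊗[R] (H ⊗[R] H) :=
    (Algebra.TensorProduct.assoc R R R H H H).toAlgHom.comp
      (Algebra.TensorProduct.map (Bialgebra.comulAlgHom R H) (AlgHom.id R H))
  let Ψ₂ : H ⊗[R] H →ₐ[R] H ⊗[R] (H ⊗[R] H) :=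
    Algebra.TensorProduct.map (AlgHom.id R H) (Bialgebra.comulAlgHom R H)
  have hΨ (x : H) : Ψ₁ (Coalgebra.comul (R := R) x) = Ψ₂ (Coalgebra.comul (R := R) x) :=
    Coalgebra.coassoc_apply (R := R) x
  set T := e p ⊗ₜ[R] (e q ⊗ₜ[R] e r)
  -- `Ψ₁ (e (μ p q) ⊗ e r)` and `Ψ₂ (e p ⊗ e (μ q r))` fix `T`, and `Δ (e l)` acts on
  -- `e (μ p q) ⊗ e r` resp. `e p ⊗ e (μ q r)` by an indicator
  have h₁ (l : κ) : Ψ₁ (Coalgebra.comul (R := R) (e l)) * T =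
      if μ (μ p q) r = l then T else 0 := by
    have hT : Ψ₁ (e (μ p q) ⊗ₜ e r) * T = T := by
      have : T = Algebra.TensorProduct.assoc R R R H H H ((e p ⊗ₜ e q) ⊗ₜ e r) := rfl
      rw [this]
      simp only [Ψ₁, AlgHom.comp_apply, Algebra.TensorProduct.map_tmul, AlgEquiv.coe_toAlgHom,
        ← map_mul, Algebra.TensorProduct.tmul_mul_tmul, Bialgebra.comulAlgHom_apply,
        AlgHom.id_apply, hμ.comul_mul_tmul, if_true, (he.idem r).eq]
    rw [← hT, ← _root_.mul_assoc, ← map_mul, hμ.comul_mul_tmul]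
    split_ifs <;> simp [hT]
  have h₂ (l : κ) : Ψ₂ (Coalgebra.comul (R := R) (e l)) * T =
      if μ p (μ q r) = l then T else 0 := by
    have hT : Ψ₂ (e p ⊗ₜ e (μ q r)) * T = T := by
      simp only [Ψ₂, T, Algebra.TensorProduct.map_tmul, Algebra.TensorProduct.tmul_mul_tmul,
        Bialgebra.comulAlgHom_apply, AlgHom.id_apply, hμ.comul_mul_tmul, if_true, (he.idem p).eq]
    rw [← hT, ← _root_.mul_assoc, ← map_mul, hμ.comul_mul_tmul]
    split_ifs <;> simp [hT]
  have h := (h₁ (μ (μ p q) r)).symm.trans ((congrArg (· * T) (hΨ _)).trans (h₂ _))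
  by_contra hne
  simp [Ne.symm hne] at h
  exact TensorProduct.tmul_ne_zero (he₀ p) (TensorProduct.tmul_ne_zero (he₀ q) (he₀ r)) h

end Bialgebra

section HopfAlgebra

variable {R H κ : Type*} [Field R] [Ring H] [HopfAlgebra R H] [Fintype κ] [DecidableEq κ]
  {e : κ → H} {μ : κ → κ → κ}

theorem IsComulDualToMul.sum_antipode_mul (hμ : IsComulDualToMul R e μ)
    (he : CompleteOrthogonalIdempotents e) (l c : κ) :
    ∑ a, (if μ a c = l then HopfAlgebra.antipode R (e a) * e c else 0) =
      Coalgebra.counit (R := R) (e l) • e c := by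
  have h := congrArg (· * e c) (HopfAlgebra.mul_antipode_rTensor_comul_apply (R := R) (e l))
  simp only [← LinearMap.mul'_rTensor_mul_one_tmul, Algebra.algebraMap_eq_smul_one,
    smul_one_mul] at h
  rw [← h, ← he.complete, TensorProduct.sum_tmul, Finset.mul_sum]
  simp [hμ.comul_mul_tmul, apply_ite]

theorem IsComulDualToMul.exists_mul_eq (hμ : IsComulDualToMul R e μ)
    (he : CompleteOrthogonalIdempotents e) (he₀ : ∀ i, e i ≠ 0) {u : κ}
    (hu : ∀ g, Coalgebra.counit (R := R) (e g) = if g = u then 1 else 0) (b : κ) :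
    ∃ a, μ a b = u := by
  by_contra! h
  have key := hμ.sum_antipode_mul he u b
  simp [h, hu] at key
  exact he₀ b key.symm

end HopfAlgebra

section Group

variable {R H G : Type*} [Field R] [Ring H] [Group G] [Fintype G] [DecidableEq G] {e : G → H}

theorem IsComulDualToMul.comul_eq_sum_tmul_inv_mul [Bialgebra R H]
    (hμ : IsComulDualToMul R e (· * ·)) (he : CompleteOrthogonalIdempotents e) (g : G) :
    Coalgebra.comul (R := R) (e g) = ∑ h, e h ⊗ₜ[R] e (h⁻¹ * g) := by
  rw [hμ.comul_eq_sum he]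
  refine Finset.sum_congr rfl fun h _ => ?_
  simp [← eq_inv_mul_iff_mul_eq]

theorem IsComulDualToMul.antipode_eq_inv [HopfAlgebra R H] (hμ : IsComulDualToMul R e (· * ·))
    (he : CompleteOrthogonalIdempotents e)
    (hu : ∀ g, Coalgebra.counit (R := R) (e g) = if g = 1 then 1 else 0) (g : G) :
    HopfAlgebra.antipode R (e g) = e g⁻¹ := by
  have key (c : G) : HopfAlgebra.antipode R (e g) * e c = if g⁻¹ = c then e c else 0 := by
    simpa [hu, mul_eq_one_iff_inv_eq] using hμ.sum_antipode_mul he (g * c) c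
  calc HopfAlgebra.antipode R (e g) = HopfAlgebra.antipode R (e g) * ∑ c, e c := by
        rw [he.complete, mul_one]
    _ = e g⁻¹ := by simp [Finset.mul_sum, key]

end Group

theorem stmt5 {H : Type} [Ring H] [HopfAlgebra ℂ H] {ι : Type} [Fintype ι]
    (B : Module.Basis ι ℂ H) (hpos : IsPositiveBasis B)
    (k : ℕ) (d : Fin k → ι) (hd : Function.Injective d)
    (h1 : (1 : H) = ∑ i : Fin k, B (d i)) :
    ∃ (Γ : FinGrp) (e : Γ.carrier ≃ Fin k),
      -- write `D g` for the basis element `d_{g₊}`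
      (∀ g h : Γ.carrier, g = h → B (d (e g)) * B (d (e h)) = B (d (e g))) ∧
      (∀ g h : Γ.carrier, g ≠ h → B (d (e g)) * B (d (e h)) = 0) ∧
      (∀ g : Γ.carrier, Coalgebra.comul (R := ℂ) (B (d (e g))) =
        ∑ h : Γ.carrier, B (d (e h)) ⊗ₜ[ℂ] B (d (e (h⁻¹ * g)))) ∧
      (∀ g : Γ.carrier,
        HopfAlgebra.antipode (R := ℂ) (B (d (e g))) = B (d (e g⁻¹))) ∧
      ((1 : H) = ∑ g : Γ.carrier, B (d (e g))) ∧
      (Coalgebra.counit (R := ℂ) (B (d (e (1 : Γ.carrier)))) = 1) ∧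
      (∀ g : Γ.carrier, g ≠ 1 → Coalgebra.counit (R := ℂ) (B (d (e g))) = 0) := by
  have he := B.completeOrthogonalIdempotents_of_mul_nonneg hd hpos.mul_nonneg h1
  have he₀ (i : Fin k) : B (d i) ≠ 0 := B.ne_zero (d i)
  obtain ⟨μ, hμ⟩ := B.exists_isComulDualToMul he hpos.comul_nonneg
  obtain ⟨u, hu⟩ := exists_counit_eq_ite (R := ℂ) he
  choose inv hinv using hμ.exists_mul_eq he he₀ hu
  let _ : Mul (Fin k) := ⟨μ⟩
  let _ : One (Fin k) := ⟨u⟩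
  let _ : Inv (Fin k) := ⟨inv⟩
  let _ : Group (Fin k) :=
    Group.ofLeftAxioms (hμ.mul_assoc he he₀) (hμ.one_mul he he₀ hu) hinv
  refine ⟨⟨Fin k⟩, Equiv.refl _, fun g h hgh => hgh ▸ (he.idem g).eq, fun g h hgh => he.ortho hgh,
    hμ.comul_eq_sum_tmul_inv_mul he, hμ.antipode_eq_inv he hu, h1,
    (hu u).trans (if_pos rfl), fun g hg => (hu g).trans (if_neg hg)⟩
end

section
/- Let H be a finite-dimensional Hopf algebra over ℂ with a positive basis B, and suppose 1 = d₁ + ⋯ + d_k where d₁, …, d_k are distinct elements of B. Then for any b ∈ B there are unique indices i and j in {1, …, k} such that d_i b = b and d_{i'} b = 0 for all i' ≠ i, and b d_j = b and b d_{j'} = 0 for all j' ≠ j. -/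
open scoped TensorProduct ComplexOrder

/-!
Multiplying the decomposition `1 = ∑ i, B (d i)` by a basis vector `B c` on either side writes
`B c` as a sum of vectors with nonnegative coordinates, so each summand `B (d i) * B c` and
`B c * B (d i)` is a multiple of `B c`. Comparing the two descriptions of `B (d i) * B (d j)`
shows that the `B (d i)` are complete orthogonal idempotents. Left (or right) multiplication by
them is then a complete family of orthogonal projections having every `B c` as an eigenvector,
and such a vector is fixed by exactly one of the projections and killed by all the others.
-/

theorem Module.Basis.exists_eq_smul_of_nonneg_of_sum_eq {R M ι κ : Type*} [Semiring R]
    [PartialOrder R] [IsOrderedAddMonoid R] [AddCommMonoid M] [Module R M] (B : Basis ι R M)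
    {s : Finset κ} {w : κ → M} {b : ι} (hw : ∀ i ∈ s, ∀ c, 0 ≤ B.repr (w i) c)
    (hsum : ∑ i ∈ s, w i = B b) {i : κ} (hi : i ∈ s) : ∃ a : R, w i = a • B b := by
  refine ⟨B.repr (w i) b, B.repr.injective ?_⟩
  ext c
  by_cases hc : c = b
  · simp [hc]
  · have hzero : ∑ j ∈ s, B.repr (w j) c = 0 := by
      simpa [Finsupp.single_apply, Ne.symm hc] using congr(B.repr $hsum c)
    simpa [Finsupp.single_apply, Ne.symm hc] using
      (Finset.sum_eq_zero_iff_of_nonneg fun j hj => hw j hj c).1 hzero i hi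

section NonnegStructureConstants

variable {R A ι κ : Type*} [CommSemiring R] [PartialOrder R] [IsOrderedAddMonoid R]
  [Semiring A] [Algebra R A] [Fintype κ] (B : Module.Basis ι R A)
  (hmul : ∀ i j k, 0 ≤ B.repr (B i * B j) k) {d : κ → ι} (h1 : ∑ i, B (d i) = 1)
include hmul h1

theorem Module.Basis.exists_mul_eq_smul_of_sum_eq_one (i : κ) (c : ι) :
    ∃ a : R, B (d i) * B c = a • B c :=
  B.exists_eq_smul_of_nonneg_of_sum_eq (fun _ _ => hmul _ _)
    (by rw [← Finset.sum_mul, h1, one_mul]) (Finset.mem_univ i)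

theorem Module.Basis.exists_mul_eq_smul_of_sum_eq_one' (c : ι) (i : κ) :
    ∃ a : R, B c * B (d i) = a • B c :=
  B.exists_eq_smul_of_nonneg_of_sum_eq (fun _ _ => hmul _ _)
    (by rw [← Finset.mul_sum, h1, mul_one]) (Finset.mem_univ i)

theorem Module.Basis.completeOrthogonalIdempotents_of_sum_eq_one (hd : Function.Injective d) :
    CompleteOrthogonalIdempotents fun i => B (d i) := by
  refine CompleteOrthogonalIdempotents.iff_ortho_complete.2 ⟨fun i j hij => ?_, h1⟩
  obtain ⟨a, ha⟩ := B.exists_mul_eq_smul_of_sum_eq_one hmul h1 i (d j)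
  obtain ⟨a', ha'⟩ := B.exists_mul_eq_smul_of_sum_eq_one' hmul h1 (d i) j
  have ha0 : a = 0 := by
    simpa [Finsupp.single_apply, hd.ne hij] using congr(B.repr $(ha.symm.trans ha') (d j))
  simp only [ha, ha0, zero_smul]

end NonnegStructureConstants

section Multiplication

variable {R A κ : Type*} [CommSemiring R] [Semiring A] [Algebra R A] [Fintype κ]
  {e : κ → A}

theorem CompleteOrthogonalIdempotents.mulLeft (he : CompleteOrthogonalIdempotents e) :
    CompleteOrthogonalIdempotents fun i => LinearMap.mulLeft R (e i) := by
  refine CompleteOrthogonalIdempotents.iff_ortho_complete.2 ⟨fun i j hij => ?_, ?_⟩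
  · dsimp only
    rw [Module.End.mul_eq_comp, ← LinearMap.mulLeft_mul, he.ortho hij,
      LinearMap.mulLeft_zero_eq_zero]
  · ext x
    simp [← Finset.sum_mul, he.complete]

theorem CompleteOrthogonalIdempotents.mulRight (he : CompleteOrthogonalIdempotents e) :
    CompleteOrthogonalIdempotents fun i => LinearMap.mulRight R (e i) := by
  refine CompleteOrthogonalIdempotents.iff_ortho_complete.2 ⟨fun i j hij => ?_, ?_⟩
  · dsimp only
    rw [Module.End.mul_eq_comp, ← LinearMap.mulRight_mul, he.ortho hij.symm,
      LinearMap.mulRight_zero_eq_zero]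
  · ext x
    simp [← Finset.mul_sum, he.complete]

end Multiplication

theorem CompleteOrthogonalIdempotents.existsUnique_apply_eq_self {R M κ : Type*} [Semiring R]
    [IsCancelMulZero R] [AddCommMonoid M] [Module R M] [Module.IsTorsionFree R M] [Fintype κ]
    {f : κ → Module.End R M} (hf : CompleteOrthogonalIdempotents f) {x : M} (hx : x ≠ 0)
    (hfx : ∀ i, ∃ a : R, f i x = a • x) :
    ∃! i, f i x = x ∧ ∀ j, j ≠ i → f j x = 0 := by
  have hsum : ∑ i, f i x = x := by
    simpa only [LinearMap.sum_apply, Module.End.one_apply] using congr($hf.complete x)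
  obtain ⟨i, -, hi⟩ := Finset.exists_ne_zero_of_sum_ne_zero (hsum ▸ hx)
  have hkill : ∀ j, j ≠ i → f j x = 0 := by
    intro j hj
    obtain ⟨a, ha⟩ := hfx j
    have : a • f i x = 0 := by
      rw [← map_smul, ← ha, ← Module.End.mul_apply, hf.ortho hj.symm, LinearMap.zero_apply]
    rw [ha, (smul_eq_zero_iff_left hi).1 this, zero_smul]
  have hfix : f i x = x := by
    rwa [Finset.sum_eq_single i (fun j _ hj => hkill j hj) (by simp)] at hsum
  exact ⟨i, ⟨hfix, hkill⟩, fun j ⟨_, hj⟩ =>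
    by_contra fun hji => hi (hj i (Ne.symm hji))⟩

theorem stmt6_general {H : Type} [Ring H] [HopfAlgebra ℂ H] {ι : Type}
    (B : Module.Basis ι ℂ H) (hpos : IsPositiveBasis B)
    (k : ℕ) (d : Fin k → ι) (hd : Function.Injective d)
    (h1 : (1 : H) = ∑ i : Fin k, B (d i)) :
    ∀ b : ι,
      (∃! i : Fin k, B (d i) * B b = B b ∧
        ∀ i' : Fin k, i' ≠ i → B (d i') * B b = 0) ∧
      (∃! j : Fin k, B b * B (d j) = B b ∧
        ∀ j' : Fin k, j' ≠ j → B b * B (d j') = 0) := by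
  intro b
  have he := B.completeOrthogonalIdempotents_of_sum_eq_one hpos.mul_nonneg h1.symm hd
  exact ⟨he.mulLeft.existsUnique_apply_eq_self (B.ne_zero b)
      fun i => B.exists_mul_eq_smul_of_sum_eq_one hpos.mul_nonneg h1.symm i b,
    he.mulRight.existsUnique_apply_eq_self (B.ne_zero b)
      fun j => B.exists_mul_eq_smul_of_sum_eq_one' hpos.mul_nonneg h1.symm b j⟩

theorem stmt6 {H : Type} [Ring H] [HopfAlgebra ℂ H] {ι : Type} [Fintype ι]
    (B : Module.Basis ι ℂ H) (hpos : IsPositiveBasis B)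
    (k : ℕ) (d : Fin k → ι) (hd : Function.Injective d)
    (h1 : (1 : H) = ∑ i : Fin k, B (d i)) :
    ∀ b : ι,
      (∃! i : Fin k, B (d i) * B b = B b ∧
        ∀ i' : Fin k, i' ≠ i → B (d i') * B b = 0) ∧
      (∃! j : Fin k, B b * B (d j) = B b ∧
        ∀ j' : Fin k, j' ≠ j → B b * B (d j') = 0) :=
  stmt6_general B hpos k d hd h1
end

section
/- Let H be a finite-dimensional Hopf algebra over ℂ with a positive basis B, scaled so that 1 = Σ_{g₊∈G₊} d_{g₊} with the d_{g₊} ∈ B distinct orthogonal idempotents indexed by a finite group G₊ as in the identification of their span with (ℂG₊)*. Then the elements b ∈ B with ε(b) > 0 can be rescaled by positive real numbers (without changing the d_{g₊}) so that ε = Σ_{b∈G₋} b* in the dual basis, where G₋ := {b ∈ B : ε(b) ≠ 0}; after this rescaling, G₋ is closed under the multiplication of H and forms a group whose identity element is d_e (the unique d_{g₊} with ε(d_{g₊}) ≠ 0, and ε(d_e) = 1). Moreover, for each e_{g₋} ∈ G₋ one has Δ(e_{g₋}) = e_{g₋} ⊗ e_{g₋} + terms not in G₋⊗G₋, and S(e_{g₋})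 = e_{g₋⁻¹} + terms not in G₋. -/
open scoped TensorProduct ComplexOrder

/-- The first part of the standard setup: a positive basis `B` of `H`, scaled so that
`1 = ∑_{g₊ ∈ G₊} d_{g₊}` with the `d_{g₊} ∈ B` distinct elements indexed by a finite
group `G₊`, whose span is the Hopf subalgebra `(ℂ G₊)*`. -/
structure SetupPlus (H : Type*) [Ring H] [HopfAlgebra ℂ H] (ι : Type*) [Fintype ι]
    (Gp : Type*) [Group Gp] [Fintype Gp] where
  B : Module.Basis ι ℂ H
  pos : IsPositiveBasis B
  d : Gp → ι
  d_inj : Function.Injective d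
  one_eq : (1 : H) = ∑ g : Gp, B (d g)
  d_mul_self : ∀ g : Gp, B (d g) * B (d g) = B (d g)
  d_mul_ne : ∀ g h : Gp, g ≠ h → B (d g) * B (d h) = 0
  d_comul : ∀ g : Gp, Coalgebra.comul (R := ℂ) (B (d g)) =
    ∑ h : Gp, B (d h) ⊗ₜ[ℂ] B (d (h⁻¹ * g))
  d_antipode : ∀ g : Gp, HopfAlgebra.antipode (R := ℂ) (B (d g)) = B (d g⁻¹)
  d_counit_one : Coalgebra.counit (R := ℂ) (B (d 1)) = 1
  d_counit_ne : ∀ g : Gp, g ≠ 1 → Coalgebra.counit (R := ℂ) (B (d g)) = 0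

/-- The full standard setup: in addition the basis is scaled so that
`ε = ∑_{b ∈ G₋} b*`, where `G₋ = {b ∈ B : ε(b) ≠ 0}` is closed under the
multiplication of `H` and forms a group (with identity `d_e`), whose elements are
`e_{g₋}` for `g₋` in a finite group `G₋`. -/
structure SetupFull (H : Type*) [Ring H] [HopfAlgebra ℂ H] (ι : Type*) [Fintype ι]
    (Gp : Type*) [Group Gp] [Fintype Gp] (Gn : Type*) [Group Gn] [Fintype Gn] extends
    SetupPlus H ι Gp where
  en : Gn → ι
  en_inj : Function.Injective en
  en_range : ∀ i : ι, Coalgebra.counit (R := ℂ) (B i) ≠ 0 ↔ ∃ x : Gn, en x = i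
  en_counit : ∀ x : Gn, Coalgebra.counit (R := ℂ) (B (en x)) = 1
  en_mul : ∀ x y : Gn, B (en x) * B (en y) = B (en (x * y))
  en_one : en 1 = d 1

section
variable {H : Type*} [Ring H] [HopfAlgebra ℂ H] {ι : Type*} [Fintype ι]
  {Gp : Type*} [Group Gp] [Fintype Gp] {Gn : Type*} [Group Gn] [Fintype Gn]

/-- `α₊(b) = g₊`, i.e. `d_{g₊} b = b`. -/
def IsAlphaPlus (S : SetupPlus H ι Gp) (i : ι) (g : Gp) : Prop :=
  S.B (S.d g) * S.B i = S.B i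

/-- `β₊(b) = g₊`, i.e. `b d_{g₊} = b`. -/
def IsBetaPlus (S : SetupPlus H ι Gp) (i : ι) (g : Gp) : Prop :=
  S.B i * S.B (S.d g) = S.B i

/-- `α₋(b) = g₋`: the only term of `Δ(b)` lying in `G₋ ⊗ B` is `e_{g₋} ⊗ b`,
and it has coefficient `1`. -/
def IsAlphaMinus (S : SetupFull H ι Gp Gn) (i : ι) (x : Gn) : Prop :=
  (S.B.tensorProduct S.B).repr (Coalgebra.comul (R := ℂ) (S.B i)) (S.en x, i) = 1 ∧
  ∀ (y : Gn) (j : ι), ¬(y = x ∧ j = i) →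
    (S.B.tensorProduct S.B).repr (Coalgebra.comul (R := ℂ) (S.B i)) (S.en y, j) = 0

/-- `β₋(b) = g₋`: the only term of `Δ(b)` lying in `B ⊗ G₋` is `b ⊗ e_{g₋}`,
and it has coefficient `1`. -/
def IsBetaMinus (S : SetupFull H ι Gp Gn) (i : ι) (x : Gn) : Prop :=
  (S.B.tensorProduct S.B).repr (Coalgebra.comul (R := ℂ) (S.B i)) (i, S.en x) = 1 ∧
  ∀ (y : Gn) (j : ι), ¬(y = x ∧ j = i) →
    (S.B.tensorProduct S.B).repr (Coalgebra.comul (R := ℂ) (S.B i)) (j, S.en y) = 0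

end

/-!
Dividing every `b ∈ B` with `ε(b) ≠ 0` by `ε(b)` keeps the basis positive and fixes the
`d_{g₊}`; afterwards `ε = 1` on `G₋`. The counit axiom `∑ⱼ Δ(b)_{j,k} ε(bⱼ) = δ_{b,k}` has
nonnegative terms, so for `b ∈ G₋` the only `G₋ ⊗ G₋`-term of `Δ(b)` is `b ⊗ b`, with
coefficient `1`. The antipode axiom then bounds `b S(b)` and `S(b) b` coordinatewise by `1`, so
they lie in the span of the `d_{g₊}`, with `d_e`-coordinate `ε = 1`.

Let `b, b' ∈ G₋`. Every term `c` of `b b'` satisfies `c d_e = c`, hence `c m S(m) = c` for all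
`m ∈ G₋`. If `ε(c) = 0`, the antipode axiom for `c` is a sum of nonnegative terms equal to `0`,
and it yields some `m ∈ G₋` with `c m = 0`, a contradiction; so all terms of `b b'` lie in `G₋`.
Since `Δ(b b') ≥ b b' ⊗ b b'` while `Δ` has no off-diagonal `G₋ ⊗ G₋`-terms, `b b'` is a single
element of `G₋`. Finally, if `m ∈ G₋` is a term of `S(b)`, then `m b ∈ G₋` is a term of
`S(b) b ≤ 1`, so `m b = d_e`: this gives the inverses.
-/

open Module

local notation "ε" => Coalgebra.counit (R := ℂ)
local notation "Δ" => Coalgebra.comul (R := ℂ)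
local notation "𝒮" => HopfAlgebra.antipode ℂ

section Cone

variable {ι M : Type*} [AddCommGroup M] [Module ℂ M]

theorem map_nonneg_of_repr_nonneg [Fintype ι] {N : Type*} [AddCommMonoid N] [PartialOrder N]
    [IsOrderedAddMonoid N] [Module ℂ N] [PosSMulMono ℂ N] (B : Basis ι ℂ M) (f : M →ₗ[ℂ] N)
    (hf : ∀ i, 0 ≤ f (B i)) {x : M} (hx : 0 ≤ B.repr x) : 0 ≤ f x := by
  rw [← B.sum_repr x, map_sum]
  exact Finset.sum_nonneg fun i _ => by rw [map_smul]; exact smul_nonneg (hx i) (hf i)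

theorem repr_self_nonneg (B : Basis ι ℂ M) (i : ι) : 0 ≤ B.repr (B i) := by
  rw [B.repr_self]
  exact Finsupp.single_nonneg.mpr zero_le_one

theorem eq_zero_of_sum_eq_zero_of_repr_nonneg {α : Type*} (B : Basis ι ℂ M) {s : Finset α}
    {f : α → M} (hf : ∀ a ∈ s, 0 ≤ B.repr (f a)) (h : ∑ a ∈ s, f a = 0) {a : α} (ha : a ∈ s) :
    f a = 0 := by
  have hsum : ∑ a ∈ s, B.repr (f a) = 0 := by rw [← map_sum, h, map_zero]
  exact B.repr.map_eq_zero_iff.mp ((Finset.sum_eq_zero_iff_of_nonneg hf).mp hsum a ha)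

theorem repr_le_repr_sum_of_nonneg {α : Type*} (B : Basis ι ℂ M) {s : Finset α} {f : α → M}
    (hf : ∀ a ∈ s, 0 ≤ B.repr (f a)) {a : α} (ha : a ∈ s) :
    B.repr (f a) ≤ B.repr (∑ a ∈ s, f a) := by
  rw [map_sum]
  exact Finset.single_le_sum hf ha

theorem repr_smul_nonneg (B : Basis ι ℂ M) {c : ℂ} {x : M} (hc : 0 ≤ c) (hx : 0 ≤ B.repr x) :
    0 ≤ B.repr (c • x) := by
  rw [map_smul]
  exact smul_nonneg hc hx

theorem eq_repr_smul_of_sum_eq_basis {α : Type*} (B : Basis ι ℂ M) {s : Finset α} {f : α → M}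
    (hf : ∀ a ∈ s, 0 ≤ B.repr (f a)) {k : ι} (h : ∑ a ∈ s, f a = B k) {a : α} (ha : a ∈ s) :
    f a = B.repr (f a) k • B k := by
  classical
  refine B.repr.injective (Finsupp.ext fun n => ?_)
  rw [map_smul, B.repr_self, Finsupp.smul_apply, Finsupp.single_apply]
  split_ifs with hkn
  · rw [hkn, smul_eq_mul, mul_one]
  · have hsum : ∑ a ∈ s, B.repr (f a) n = 0 := by
      rw [← Finsupp.finsetSum_apply, ← map_sum, h, B.repr_self_apply, if_neg hkn]
    rw [smul_zero]
    exact (Finset.sum_eq_zero_iff_of_nonneg fun a ha => hf a ha n).mp hsum a ha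

theorem tensor_repr_tmul_nonneg {κ N : Type*} [AddCommGroup N] [Module ℂ N] (B : Basis ι ℂ M)
    (C : Basis κ ℂ N) {x : M} {y : N} (hx : 0 ≤ B.repr x) (hy : 0 ≤ C.repr y) :
    0 ≤ (B.tensorProduct C).repr (x ⊗ₜ[ℂ] y) := fun p => by
  rw [Basis.tensorProduct_repr_tmul_apply, smul_eq_mul]
  exact mul_nonneg (hy p.2) (hx p.1)

end Cone

section Coordinates

variable {H ι : Type*} [Ring H] [HopfAlgebra ℂ H] [Fintype ι] (B : Basis ι ℂ H)

theorem counit_eq_sum_repr_mul (x : H) : ε x = ∑ j, B.repr x j * ε (B j) := by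
  conv_lhs => rw [← B.sum_repr x]
  simp only [map_sum, map_smul, smul_eq_mul]

theorem exists_repr_ne_zero_of_counit_ne_zero {x : H} (hx : ε x ≠ 0) :
    ∃ m, B.repr x m ≠ 0 ∧ ε (B m) ≠ 0 := by
  rw [counit_eq_sum_repr_mul B x] at hx
  obtain ⟨m, -, hm⟩ := Finset.exists_ne_zero_of_sum_ne_zero hx
  exact ⟨m, mul_ne_zero_iff.mp hm⟩

theorem eq_of_eq_smul_of_counit_eq {v x : H} {c : ℂ} (h : v = c • x) (hε : ε v = ε x)
    (hx : ε x ≠ 0) : v = x := by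
  rw [h, map_smul, smul_eq_mul, mul_eq_right₀ hx] at hε
  rw [h, hε, one_smul]

theorem tensor_repr_comul_apply (x : H) (p : ι × ι) :
    (B.tensorProduct B).repr (Δ x) p = ∑ n, B.repr x n * (B.tensorProduct B).repr (Δ (B n)) p := by
  conv_lhs => rw [← B.sum_repr x]
  simp only [map_sum, map_smul, Finsupp.finsetSum_apply, Finsupp.smul_apply, smul_eq_mul]

theorem sum_tensor_repr_mul_counit_fst (z : H ⊗[ℂ] H) (k : ι) :
    ∑ j, (B.tensorProduct B).repr z (j, k) * ε (B j) =
      B.repr (TensorProduct.lid ℂ H (Coalgebra.counit.rTensor H z)) k := by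
  induction z using TensorProduct.induction_on with
  | zero => simp
  | tmul x y =>
    simp only [Basis.tensorProduct_repr_tmul_apply, LinearMap.rTensor_tmul,
      TensorProduct.lid_tmul, map_smul, Finsupp.smul_apply, smul_eq_mul,
      counit_eq_sum_repr_mul B x, Finset.sum_mul]
    exact Finset.sum_congr rfl fun j _ => by ring
  | add z w hz hw => simp only [map_add, Finsupp.add_apply, add_mul, Finset.sum_add_distrib, hz, hw]

theorem sum_tensor_repr_mul_counit_snd (z : H ⊗[ℂ] H) (j : ι) :
    ∑ k, (B.tensorProduct B).repr z (j, k) * ε (B k) =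
      B.repr (TensorProduct.rid ℂ H (Coalgebra.counit.lTensor H z)) j := by
  induction z using TensorProduct.induction_on with
  | zero => simp
  | tmul x y =>
    simp only [Basis.tensorProduct_repr_tmul_apply, LinearMap.lTensor_tmul,
      TensorProduct.rid_tmul, map_smul, Finsupp.smul_apply, smul_eq_mul,
      counit_eq_sum_repr_mul B y, Finset.sum_mul]
    exact Finset.sum_congr rfl fun j _ => by ring
  | add z w hz hw => simp only [map_add, Finsupp.add_apply, add_mul, Finset.sum_add_distrib, hz, hw]

theorem sum_repr_comul_mul_counit_fst (i k : ι) :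
    ∑ j, (B.tensorProduct B).repr (Δ (B i)) (j, k) * ε (B j) = B.repr (B i) k := by
  rw [sum_tensor_repr_mul_counit_fst, Coalgebra.rTensor_counit_comul, TensorProduct.lid_tmul,
    one_smul]

theorem sum_repr_comul_mul_counit_snd (i j : ι) :
    ∑ k, (B.tensorProduct B).repr (Δ (B i)) (j, k) * ε (B k) = B.repr (B i) j := by
  rw [sum_tensor_repr_mul_counit_snd, Coalgebra.lTensor_counit_comul, TensorProduct.rid_tmul,
    one_smul]

theorem sum_repr_comul_smul_antipode_mul (i : ι) :
    ∑ p : ι × ι, (B.tensorProduct B).repr (Δ (B i)) p • (𝒮 (B p.1) * B p.2) = ε (B i) • 1 := by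
  rw [← Algebra.algebraMap_eq_smul_one, ← HopfAlgebra.mul_antipode_rTensor_comul_apply]
  conv_rhs => rw [← (B.tensorProduct B).sum_repr (Δ (B i))]
  simp only [map_sum, map_smul, Basis.tensorProduct_apply', LinearMap.rTensor_tmul,
    LinearMap.mul'_apply]

theorem sum_repr_comul_smul_mul_antipode (i : ι) :
    ∑ p : ι × ι, (B.tensorProduct B).repr (Δ (B i)) p • (B p.1 * 𝒮 (B p.2)) = ε (B i) • 1 := by
  rw [← Algebra.algebraMap_eq_smul_one, ← HopfAlgebra.mul_antipode_lTensor_comul_apply]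
  conv_rhs => rw [← (B.tensorProduct B).sum_repr (Δ (B i))]
  simp only [map_sum, map_smul, Basis.tensorProduct_apply', LinearMap.lTensor_tmul,
    LinearMap.mul'_apply]

end Coordinates

namespace IsPositiveBasis

variable {H ι : Type*} [Ring H] [HopfAlgebra ℂ H] [Fintype ι] {B : Basis ι ℂ H}

theorem repr_mul_nonneg (hB : IsPositiveBasis B) {x y : H} (hx : 0 ≤ B.repr x)
    (hy : 0 ≤ B.repr y) : 0 ≤ B.repr (x * y) := by
  refine map_nonneg_of_repr_nonneg B (B.repr.toLinearMap ∘ₗ LinearMap.mulRight ℂ y)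
    (fun i => ?_) hx
  exact map_nonneg_of_repr_nonneg B (B.repr.toLinearMap ∘ₗ LinearMap.mulLeft ℂ (B i))
    (fun j k => hB.mul_nonneg i j k) hy

theorem repr_antipode_nonneg (hB : IsPositiveBasis B) {x : H} (hx : 0 ≤ B.repr x) :
    0 ≤ B.repr (𝒮 x) :=
  map_nonneg_of_repr_nonneg B (B.repr.toLinearMap ∘ₗ 𝒮) (fun i j => hB.antipode_nonneg i j) hx

theorem tensor_repr_mul_nonneg (hB : IsPositiveBasis B) {z w : H ⊗[ℂ] H}
    (hz : 0 ≤ (B.tensorProduct B).repr z) (hw : 0 ≤ (B.tensorProduct B).repr w) :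
    0 ≤ (B.tensorProduct B).repr (z * w) := by
  refine map_nonneg_of_repr_nonneg _
    ((B.tensorProduct B).repr.toLinearMap ∘ₗ LinearMap.mulRight ℂ w) (fun p => ?_) hz
  refine map_nonneg_of_repr_nonneg _
    ((B.tensorProduct B).repr.toLinearMap ∘ₗ LinearMap.mulLeft ℂ (B.tensorProduct B p))
    (fun q => ?_) hw
  simp only [LinearMap.coe_comp, LinearEquiv.coe_coe, Function.comp_apply,
    LinearMap.mulLeft_apply, Basis.tensorProduct_apply', Algebra.TensorProduct.tmul_mul_tmul]
  exact tensor_repr_tmul_nonneg B B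
    (hB.repr_mul_nonneg (repr_self_nonneg B _) (repr_self_nonneg B _))
    (hB.repr_mul_nonneg (repr_self_nonneg B _) (repr_self_nonneg B _))

theorem tensor_repr_comul_eq_zero_of_counit_fst_ne_zero (hB : IsPositiveBasis B) {i j k : ι}
    (hj : ε (B j) ≠ 0) (hk : k ≠ i) : (B.tensorProduct B).repr (Δ (B i)) (j, k) = 0 := by
  classical
  have hsum := sum_repr_comul_mul_counit_fst B i k
  rw [B.repr_self_apply, if_neg (Ne.symm hk)] at hsum
  have hterm := (Finset.sum_eq_zero_iff_of_nonneg fun l _ =>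
    _root_.mul_nonneg (hB.comul_nonneg i l k) (hB.counit_nonneg l)).mp hsum j (Finset.mem_univ j)
  exact (mul_eq_zero.mp hterm).resolve_right hj

theorem tensor_repr_comul_eq_zero_of_counit_snd_ne_zero (hB : IsPositiveBasis B) {i j k : ι}
    (hk : ε (B k) ≠ 0) (hj : j ≠ i) : (B.tensorProduct B).repr (Δ (B i)) (j, k) = 0 := by
  classical
  have hsum := sum_repr_comul_mul_counit_snd B i j
  rw [B.repr_self_apply, if_neg (Ne.symm hj)] at hsum
  have hterm := (Finset.sum_eq_zero_iff_of_nonneg fun l _ =>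
    _root_.mul_nonneg (hB.comul_nonneg i j l) (hB.counit_nonneg l)).mp hsum k (Finset.mem_univ k)
  exact (mul_eq_zero.mp hterm).resolve_right hk

theorem tensor_repr_comul_eq_zero_of_counit_ne_zero (hB : IsPositiveBasis B) {i j k : ι}
    (hj : ε (B j) ≠ 0) (hk : ε (B k) ≠ 0) (hjk : ¬(j = i ∧ k = i)) :
    (B.tensorProduct B).repr (Δ (B i)) (j, k) = 0 := by
  by_cases hki : k = i
  · exact hB.tensor_repr_comul_eq_zero_of_counit_snd_ne_zero hk fun hji => hjk ⟨hji, hki⟩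
  · exact hB.tensor_repr_comul_eq_zero_of_counit_fst_ne_zero hj hki

theorem tensor_repr_comul_self (hB : IsPositiveBasis B) {i : ι} (hi : ε (B i) = 1) :
    (B.tensorProduct B).repr (Δ (B i)) (i, i) = 1 := by
  have hsum := sum_repr_comul_mul_counit_fst B i i
  rw [Finset.sum_eq_single i (fun j _ hji => ?_) (by simp), hi, mul_one] at hsum
  · simpa using hsum
  · by_cases hj : ε (B j) = 0
    · rw [hj, mul_zero]
    · rw [hB.tensor_repr_comul_eq_zero_of_counit_snd_ne_zero (by rw [hi]; exact one_ne_zero) hji,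
        zero_mul]

theorem tensor_repr_tmul_self_le_comul (hB : IsPositiveBasis B) {i : ι} (hi : ε (B i) = 1) :
    (B.tensorProduct B).repr (B i ⊗ₜ[ℂ] B i) ≤ (B.tensorProduct B).repr (Δ (B i)) := by
  classical
  rintro ⟨j, k⟩
  rw [Basis.tensorProduct_repr_tmul_apply, B.repr_self_apply, B.repr_self_apply, smul_eq_mul]
  by_cases hj : i = j
  · by_cases hk : i = k
    · subst hj hk
      simp [hB.tensor_repr_comul_self hi]
    · simpa [hk] using hB.comul_nonneg i j k
  · simpa [hj] using hB.comul_nonneg i j k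

theorem tensor_repr_tmul_le_comul_mul (hB : IsPositiveBasis B) {i j : ι} (hi : ε (B i) = 1)
    (hj : ε (B j) = 1) :
    (B.tensorProduct B).repr ((B i * B j) ⊗ₜ[ℂ] (B i * B j)) ≤
      (B.tensorProduct B).repr (Δ (B i * B j)) := by
  have hbi := tensor_repr_tmul_nonneg B B (repr_self_nonneg B i) (repr_self_nonneg B i)
  have hΔj : 0 ≤ (B.tensorProduct B).repr (Δ (B j)) := fun p => hB.comul_nonneg j p.1 p.2
  have hdi := sub_nonneg.mpr (hB.tensor_repr_tmul_self_le_comul hi)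
  have hdj := sub_nonneg.mpr (hB.tensor_repr_tmul_self_le_comul hj)
  rw [← map_sub] at hdi hdj
  have hsplit : Δ (B i * B j) - (B i * B j) ⊗ₜ[ℂ] (B i * B j) =
      (Δ (B i) - B i ⊗ₜ[ℂ] B i) * Δ (B j) + (B i ⊗ₜ[ℂ] B i) * (Δ (B j) - B j ⊗ₜ[ℂ] B j) := by
    rw [Bialgebra.comul_mul, sub_mul, mul_sub, Algebra.TensorProduct.tmul_mul_tmul]
    abel
  rw [← sub_nonneg, ← map_sub, hsplit, map_add]
  exact add_nonneg (hB.tensor_repr_mul_nonneg hdi hΔj) (hB.tensor_repr_mul_nonneg hbi hdj)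

theorem repr_mul_antipode_le_one (hB : IsPositiveBasis B) {i : ι} (hi : ε (B i) = 1) :
    B.repr (B i * 𝒮 (B i)) ≤ B.repr 1 := by
  have hsum := sum_repr_comul_smul_mul_antipode B i
  rw [hi, one_smul] at hsum
  have hle := repr_le_repr_sum_of_nonneg B (s := Finset.univ) (a := (i, i))
    (f := fun p => (B.tensorProduct B).repr (Δ (B i)) p • (B p.1 * 𝒮 (B p.2)))
    (fun p _ => ?_) (Finset.mem_univ _)
  · rwa [hsum, hB.tensor_repr_comul_self hi, one_smul] at hle
  · exact repr_smul_nonneg B (hB.comul_nonneg i p.1 p.2)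
      (hB.repr_mul_nonneg (repr_self_nonneg B _) (hB.repr_antipode_nonneg (repr_self_nonneg B _)))

theorem repr_antipode_mul_le_one (hB : IsPositiveBasis B) {i : ι} (hi : ε (B i) = 1) :
    B.repr (𝒮 (B i) * B i) ≤ B.repr 1 := by
  have hsum := sum_repr_comul_smul_antipode_mul B i
  rw [hi, one_smul] at hsum
  have hle := repr_le_repr_sum_of_nonneg B (s := Finset.univ) (a := (i, i))
    (f := fun p => (B.tensorProduct B).repr (Δ (B i)) p • (𝒮 (B p.1) * B p.2))
    (fun p _ => ?_) (Finset.mem_univ _)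
  · rwa [hsum, hB.tensor_repr_comul_self hi, one_smul] at hle
  · exact repr_smul_nonneg B (hB.comul_nonneg i p.1 p.2)
      (hB.repr_mul_nonneg (hB.repr_antipode_nonneg (repr_self_nonneg B _)) (repr_self_nonneg B _))

theorem exists_mul_eq_zero_of_counit_eq_zero (hB : IsPositiveBasis B) {k : ι}
    (hk : ε (B k) = 0) : ∃ m, ε (B m) ≠ 0 ∧ B k * B m = 0 := by
  classical
  obtain ⟨k₁, -, hk₁⟩ : ∃ k₁ ∈ Finset.univ,
      (B.tensorProduct B).repr (Δ (B k)) (k, k₁) * ε (B k₁) ≠ 0 := by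
    apply Finset.exists_ne_zero_of_sum_ne_zero
    rw [sum_repr_comul_mul_counit_snd, B.repr_self_apply, if_pos rfl]
    exact one_ne_zero
  obtain ⟨hA, hε₁⟩ := mul_ne_zero_iff.mp hk₁
  have hkS : B k * 𝒮 (B k₁) = 0 := by
    have hsum := sum_repr_comul_smul_mul_antipode B k
    rw [hk, zero_smul] at hsum
    refine (smul_eq_zero.mp (eq_zero_of_sum_eq_zero_of_repr_nonneg B (fun p _ => ?_) hsum
      (Finset.mem_univ (k, k₁)))).resolve_left hA
    exact repr_smul_nonneg B (hB.comul_nonneg k p.1 p.2)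
      (hB.repr_mul_nonneg (repr_self_nonneg B _) (hB.repr_antipode_nonneg (repr_self_nonneg B _)))
  obtain ⟨m, hs, hεm⟩ := exists_repr_ne_zero_of_counit_ne_zero B
    (by rwa [HopfAlgebra.counit_antipode] : ε (𝒮 (B k₁)) ≠ 0)
  have hsum : ∑ n, B.repr (𝒮 (B k₁)) n • (B k * B n) = 0 := by
    rw [← hkS]
    conv_rhs => rw [← B.sum_repr (𝒮 (B k₁))]
    simp only [Finset.mul_sum, mul_smul_comm]
  refine ⟨m, hεm, (smul_eq_zero.mp (eq_zero_of_sum_eq_zero_of_repr_nonneg B (fun n _ => ?_) hsum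
    (Finset.mem_univ m))).resolve_left hs⟩
  exact repr_smul_nonneg B (hB.antipode_nonneg k₁ n)
    (hB.repr_mul_nonneg (repr_self_nonneg B _) (repr_self_nonneg B _))

end IsPositiveBasis

section Rescale

variable {H ι : Type*} [Ring H] [HopfAlgebra ℂ H] {B : Basis ι ℂ H} {c : ι → ℝ}

noncomputable def positiveRescale (B : Basis ι ℂ H) (hc : ∀ i, 0 < c i) : Basis ι ℂ H :=
  B.unitsSMul fun i => Units.mk0 (c i : ℂ) (Complex.ofReal_ne_zero.mpr (hc i).ne')

theorem positiveRescale_apply (hc : ∀ i, 0 < c i) (i : ι) :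
    positiveRescale B hc i = (c i : ℂ) • B i :=
  Basis.unitsSMul_apply i

theorem positiveRescale_repr (hc : ∀ i, 0 < c i) (x : H) (i : ι) :
    (positiveRescale B hc).repr x i = ((c i)⁻¹ : ℝ) * B.repr x i := by
  rw [positiveRescale, Basis.repr_unitsSMul, Units.smul_def, Units.val_inv_eq_inv_val,
    Units.val_mk0, Complex.ofReal_inv, smul_eq_mul]

theorem positiveRescale_tensor_repr (hc : ∀ i, 0 < c i) (z : H ⊗[ℂ] H) (p : ι × ι) :
    ((positiveRescale B hc).tensorProduct (positiveRescale B hc)).repr z p =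
      ((c p.1)⁻¹ * (c p.2)⁻¹ : ℝ) * (B.tensorProduct B).repr z p := by
  induction z using TensorProduct.induction_on with
  | zero => simp
  | tmul x y =>
    obtain ⟨j, k⟩ := p
    simp only [Basis.tensorProduct_repr_tmul_apply, positiveRescale_repr, smul_eq_mul,
      Complex.ofReal_mul]
    ring
  | add z w hz hw => rw [map_add, map_add, Finsupp.add_apply, Finsupp.add_apply, hz, hw, mul_add]

theorem IsPositiveBasis.rescale (hB : IsPositiveBasis B) (hc : ∀ i, 0 < c i) :
    IsPositiveBasis (positiveRescale B hc) := by
  have hc0 : ∀ i, (0 : ℂ) ≤ c i := fun i => Complex.zero_le_real.mpr (hc i).le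
  have hc0' : ∀ i, (0 : ℂ) ≤ ((c i)⁻¹ : ℝ) := fun i =>
    Complex.zero_le_real.mpr (inv_pos.mpr (hc i)).le
  refine ⟨fun i => ?_, fun i => ?_, fun i j k => ?_, fun i j k => ?_, fun i j => ?_⟩
  · rw [positiveRescale_repr]
    exact _root_.mul_nonneg (hc0' i) (hB.one_nonneg i)
  · rw [positiveRescale_apply, map_smul, smul_eq_mul]
    exact _root_.mul_nonneg (hc0 i) (hB.counit_nonneg i)
  · rw [positiveRescale_repr, positiveRescale_apply, positiveRescale_apply, smul_mul_smul_comm,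
      map_smul, Finsupp.smul_apply, smul_eq_mul]
    exact _root_.mul_nonneg (hc0' k)
      (_root_.mul_nonneg (_root_.mul_nonneg (hc0 i) (hc0 j)) (hB.mul_nonneg i j k))
  · rw [positiveRescale_tensor_repr, positiveRescale_apply, map_smul, map_smul,
      Finsupp.smul_apply, smul_eq_mul, Complex.ofReal_mul]
    exact _root_.mul_nonneg (_root_.mul_nonneg (hc0' j) (hc0' k))
      (_root_.mul_nonneg (hc0 i) (hB.comul_nonneg i j k))
  · rw [positiveRescale_repr, positiveRescale_apply, map_smul, map_smul, Finsupp.smul_apply,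
      smul_eq_mul]
    exact _root_.mul_nonneg (hc0' j) (_root_.mul_nonneg (hc0 i) (hB.antipode_nonneg i j))

noncomputable def counitNormalizer (B : Basis ι ℂ H) (i : ι) : ℝ :=
  if ε (B i) = 0 then 1 else (ε (B i)).re⁻¹

theorem counitNormalizer_of_counit_eq_zero {i : ι} (hi : ε (B i) = 0) :
    counitNormalizer B i = 1 :=
  if_pos hi

theorem counitNormalizer_of_counit_eq_one {i : ι} (hi : ε (B i) = 1) :
    counitNormalizer B i = 1 := by
  rw [counitNormalizer, if_neg (by rw [hi]; exact one_ne_zero), hi, Complex.one_re, inv_one]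

theorem IsPositiveBasis.counitNormalizer_pos (hB : IsPositiveBasis B) (i : ι) :
    0 < counitNormalizer B i := by
  unfold counitNormalizer
  split_ifs with hi
  · exact one_pos
  · exact inv_pos.mpr (Complex.pos_iff.mp ((hB.counit_nonneg i).lt_of_ne' hi)).1

theorem IsPositiveBasis.counit_rescale_counitNormalizer (hB : IsPositiveBasis B) {i : ι}
    (hi : ε (positiveRescale B hB.counitNormalizer_pos i) ≠ 0) :
    ε (positiveRescale B hB.counitNormalizer_pos i) = 1 := by
  rw [positiveRescale_apply, map_smul, smul_eq_mul] at hi ⊢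
  have hε : ε (B i) ≠ 0 := right_ne_zero_of_mul hi
  obtain ⟨r, hr⟩ : ∃ r : ℝ, ε (B i) = r :=
    ⟨_, Complex.eq_re_of_ofReal_le (Complex.ofReal_zero ▸ hB.counit_nonneg i)⟩
  have hr0 : r ≠ 0 := by rintro rfl; exact hε (by simpa using hr)
  rw [counitNormalizer, if_neg hε, hr, Complex.ofReal_re, ← Complex.ofReal_mul,
    inv_mul_cancel₀ hr0, Complex.ofReal_one]

end Rescale

namespace SetupPlus

variable {H ι Gp : Type*} [Ring H] [HopfAlgebra ℂ H] [Fintype ι] [Group Gp] [Fintype Gp]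
  (S : SetupPlus H ι Gp)

class CounitNormalized : Prop where
  counit_eq_one : ∀ i, ε (S.B i) ≠ 0 → ε (S.B i) = 1

theorem counitNormalizer_d (g : Gp) : counitNormalizer S.B (S.d g) = 1 := by
  by_cases hg : g = 1
  · rw [hg]
    exact counitNormalizer_of_counit_eq_one S.d_counit_one
  · exact counitNormalizer_of_counit_eq_zero (S.d_counit_ne g hg)

theorem positiveRescale_counitNormalizer_d (g : Gp) :
    positiveRescale S.B S.pos.counitNormalizer_pos (S.d g) = S.B (S.d g) := by
  rw [positiveRescale_apply, S.counitNormalizer_d, Complex.ofReal_one, one_smul]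

noncomputable def normalize : SetupPlus H ι Gp where
  B := positiveRescale S.B S.pos.counitNormalizer_pos
  pos := S.pos.rescale _
  d := S.d
  d_inj := S.d_inj
  one_eq := by simp only [S.positiveRescale_counitNormalizer_d]; exact S.one_eq
  d_mul_self := by simp only [S.positiveRescale_counitNormalizer_d]; exact S.d_mul_self
  d_mul_ne := by simp only [S.positiveRescale_counitNormalizer_d]; exact S.d_mul_ne
  d_comul := by simp only [S.positiveRescale_counitNormalizer_d]; exact S.d_comul
  d_antipode := by simp only [S.positiveRescale_counitNormalizer_d]; exact S.d_antipode
  d_counit_one := by simp only [S.positiveRescale_counitNormalizer_d]; exact S.d_counit_one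
  d_counit_ne := by simp only [S.positiveRescale_counitNormalizer_d]; exact S.d_counit_ne

instance : S.normalize.CounitNormalized :=
  ⟨fun _ hi => S.pos.counit_rescale_counitNormalizer hi⟩

theorem exists_d_eq_of_repr_one_ne_zero {n : ι} (hn : S.B.repr 1 n ≠ 0) : ∃ g, S.d g = n := by
  classical
  by_contra! h
  rw [S.one_eq, map_sum, Finsupp.finsetSum_apply] at hn
  exact hn (Finset.sum_eq_zero fun g _ => by rw [S.B.repr_self_apply, if_neg (h g)])

theorem eq_sum_d_of_repr_le_one {w : H} (hw0 : 0 ≤ S.B.repr w) (hw1 : S.B.repr w ≤ S.B.repr 1) :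
    w = ∑ g, S.B.repr w (S.d g) • S.B (S.d g) := by
  classical
  conv_lhs => rw [← S.B.sum_repr w]
  rw [← Finset.sum_image (f := fun n => S.B.repr w n • S.B n) fun g _ h _ hgh => S.d_inj hgh]
  refine (Finset.sum_subset (Finset.subset_univ _) fun n _ hn => ?_).symm
  have hn1 : S.B.repr 1 n = 0 := by
    by_contra h
    obtain ⟨g, rfl⟩ := S.exists_d_eq_of_repr_one_ne_zero h
    exact hn (Finset.mem_image_of_mem _ (Finset.mem_univ g))
  have hwn := hw1 n
  rw [hn1] at hwn
  rw [le_antisymm hwn (hw0 n), zero_smul]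

theorem mul_eq_counit_smul_of_repr_le_one {x w : H} (hx : x * S.B (S.d 1) = x)
    (hw0 : 0 ≤ S.B.repr w) (hw1 : S.B.repr w ≤ S.B.repr 1) : x * w = ε w • x := by
  classical
  have hxd : ∀ g, x * S.B (S.d g) = if g = 1 then x else 0 := fun g => by
    split_ifs with hg
    · rw [hg, hx]
    · rw [← hx, mul_assoc, S.d_mul_ne 1 g (Ne.symm hg), mul_zero]
  have hεd : ∀ g, ε (S.B (S.d g)) = if g = 1 then 1 else 0 := fun g => by
    split_ifs with hg
    · rw [hg, S.d_counit_one]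
    · exact S.d_counit_ne g hg
  conv_lhs => rw [S.eq_sum_d_of_repr_le_one hw0 hw1]
  conv_rhs => rw [S.eq_sum_d_of_repr_le_one hw0 hw1]
  simp [Finset.mul_sum, hxd, hεd]

theorem d_mul_basis_eq_smul (g : Gp) (k : ι) :
    S.B (S.d g) * S.B k = S.B.repr (S.B (S.d g) * S.B k) k • S.B k :=
  eq_repr_smul_of_sum_eq_basis S.B
    (fun _ _ => S.pos.repr_mul_nonneg (repr_self_nonneg S.B _) (repr_self_nonneg S.B _))
    (by rw [← Finset.sum_mul, ← S.one_eq, one_mul]) (Finset.mem_univ g)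

theorem basis_mul_d_eq_smul (g : Gp) (k : ι) :
    S.B k * S.B (S.d g) = S.B.repr (S.B k * S.B (S.d g)) k • S.B k :=
  eq_repr_smul_of_sum_eq_basis S.B
    (fun _ _ => S.pos.repr_mul_nonneg (repr_self_nonneg S.B _) (repr_self_nonneg S.B _))
    (by rw [← Finset.mul_sum, ← S.one_eq, mul_one]) (Finset.mem_univ g)

theorem d_one_mul_of_counit_ne_zero {k : ι} (hk : ε (S.B k) ≠ 0) :
    S.B (S.d 1) * S.B k = S.B k :=
  eq_of_eq_smul_of_counit_eq (S.d_mul_basis_eq_smul 1 k)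
    (by rw [Bialgebra.counit_mul, S.d_counit_one, one_mul]) hk

theorem mul_d_one_of_counit_ne_zero {k : ι} (hk : ε (S.B k) ≠ 0) :
    S.B k * S.B (S.d 1) = S.B k :=
  eq_of_eq_smul_of_counit_eq (S.basis_mul_d_eq_smul 1 k)
    (by rw [Bialgebra.counit_mul, S.d_counit_one, mul_one]) hk

theorem mul_d_one_of_repr_ne_zero {u : H} (hu : u * S.B (S.d 1) = u) {k : ι}
    (hk : S.B.repr u k ≠ 0) : S.B k * S.B (S.d 1) = S.B k := by
  set r : ι → ℂ := fun n => S.B.repr (S.B n * S.B (S.d 1)) n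
  have hexp : u * S.B (S.d 1) = ∑ n, (S.B.repr u n * r n) • S.B n := by
    conv_lhs => rw [← S.B.sum_repr u]
    simp only [Finset.sum_mul, smul_mul_assoc, mul_smul, r]
    exact Finset.sum_congr rfl fun n _ => by rw [← S.basis_mul_d_eq_smul]
  have hrk := congrFun (S.B.repr_sum_self fun n => S.B.repr u n * r n) k
  rw [← hexp, hu] at hrk
  have hr1 : r k = 1 := (mul_eq_left₀ hk).mp hrk.symm
  rw [S.basis_mul_d_eq_smul 1 k]
  exact (congrArg (· • S.B k) hr1).trans (one_smul ℂ _)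

theorem mul_ne_zero_of_mul_d_one {k m : ι} (hk : S.B k * S.B (S.d 1) = S.B k)
    (hm : ε (S.B m) = 1) : S.B k * S.B m ≠ 0 := by
  intro hkm
  have hw0 : 0 ≤ S.B.repr (S.B m * 𝒮 (S.B m)) :=
    S.pos.repr_mul_nonneg (repr_self_nonneg S.B m)
      (S.pos.repr_antipode_nonneg (repr_self_nonneg S.B m))
  have hεw : ε (S.B m * 𝒮 (S.B m)) = 1 := by
    rw [Bialgebra.counit_mul, HopfAlgebra.counit_antipode, hm, one_mul]
  have h := S.mul_eq_counit_smul_of_repr_le_one hk hw0 (S.pos.repr_mul_antipode_le_one hm)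
  rw [hεw, one_smul, ← mul_assoc, hkm, zero_mul] at h
  exact S.B.ne_zero k h.symm

def GMinus : Type _ := {i : ι // ε (S.B i) ≠ 0}

noncomputable instance : Fintype S.GMinus := by
  classical
  exact Subtype.fintype _

instance : One S.GMinus := ⟨⟨S.d 1, by rw [S.d_counit_one]; exact one_ne_zero⟩⟩

variable {S} in
theorem GMinus.one_val : (1 : S.GMinus).1 = S.d 1 := rfl

theorem exists_repr_antipode_ne_zero (x : S.GMinus) :
    ∃ m, S.B.repr (𝒮 (S.B x.1)) m ≠ 0 ∧ ε (S.B m) ≠ 0 :=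
  exists_repr_ne_zero_of_counit_ne_zero S.B (by rw [HopfAlgebra.counit_antipode]; exact x.2)

noncomputable instance : Inv S.GMinus :=
  ⟨fun x => ⟨_, (S.exists_repr_antipode_ne_zero x).choose_spec.2⟩⟩

variable {S} in
theorem GMinus.repr_antipode_inv_ne_zero (x : S.GMinus) : S.B.repr (𝒮 (S.B x.1)) x⁻¹.1 ≠ 0 :=
  (S.exists_repr_antipode_ne_zero x).choose_spec.1

variable [S.CounitNormalized]

theorem counit_ne_zero_of_mul_d_one {k : ι} (hk : S.B k * S.B (S.d 1) = S.B k) :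
    ε (S.B k) ≠ 0 := by
  intro hk0
  obtain ⟨m, hm, hkm⟩ := S.pos.exists_mul_eq_zero_of_counit_eq_zero hk0
  exact S.mul_ne_zero_of_mul_d_one hk (CounitNormalized.counit_eq_one m hm) hkm

theorem counit_ne_zero_of_repr_mul_ne_zero {i j k : ι} (hj : ε (S.B j) ≠ 0)
    (hk : S.B.repr (S.B i * S.B j) k ≠ 0) : ε (S.B k) ≠ 0 :=
  S.counit_ne_zero_of_mul_d_one <| S.mul_d_one_of_repr_ne_zero
    (by rw [mul_assoc, S.mul_d_one_of_counit_ne_zero hj]) hk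

theorem eq_of_repr_mul_ne_zero {i j l n : ι} (hi : ε (S.B i) ≠ 0) (hj : ε (S.B j) ≠ 0)
    (hl : S.B.repr (S.B i * S.B j) l ≠ 0) (hn : S.B.repr (S.B i * S.B j) n ≠ 0) : l = n := by
  by_contra hln
  have hΔ : (S.B.tensorProduct S.B).repr (Δ (S.B i * S.B j)) (l, n) = 0 := by
    rw [tensor_repr_comul_apply]
    refine Finset.sum_eq_zero fun p _ => ?_
    rw [S.pos.tensor_repr_comul_eq_zero_of_counit_ne_zero
      (S.counit_ne_zero_of_repr_mul_ne_zero hj hl) (S.counit_ne_zero_of_repr_mul_ne_zero hj hn)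
      fun h => hln (h.1.trans h.2.symm), mul_zero]
  have hle := S.pos.tensor_repr_tmul_le_comul_mul (CounitNormalized.counit_eq_one i hi)
    (CounitNormalized.counit_eq_one j hj) (l, n)
  rw [hΔ, Basis.tensorProduct_repr_tmul_apply, smul_eq_mul] at hle
  have hpos := S.pos.repr_mul_nonneg (repr_self_nonneg S.B i) (repr_self_nonneg S.B j)
  exact hle.not_gt (mul_pos ((hpos n).lt_of_ne' hn) ((hpos l).lt_of_ne' hl))

theorem exists_mul_eq {i j : ι} (hi : ε (S.B i) ≠ 0) (hj : ε (S.B j) ≠ 0) :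
    ∃ k, ε (S.B k) ≠ 0 ∧ S.B i * S.B j = S.B k := by
  have hε : ε (S.B i * S.B j) = 1 := by
    rw [Bialgebra.counit_mul, CounitNormalized.counit_eq_one i hi,
      CounitNormalized.counit_eq_one j hj, one_mul]
  obtain ⟨k, hk, hεk⟩ := exists_repr_ne_zero_of_counit_ne_zero S.B (hε ▸ one_ne_zero)
  refine ⟨k, hεk, eq_of_eq_smul_of_counit_eq (c := S.B.repr (S.B i * S.B j) k) ?_ ?_ hεk⟩
  · conv_lhs => rw [← S.B.sum_repr (S.B i * S.B j)]
    refine Finset.sum_eq_single k (fun n _ hnk => ?_) (by simp)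
    by_contra hn
    exact hnk (S.eq_of_repr_mul_ne_zero hi hj (left_ne_zero_of_smul hn) hk)
  · rw [hε, CounitNormalized.counit_eq_one k hεk]

theorem mul_eq_d_one_of_repr_antipode_ne_zero {m x : ι} (hm : ε (S.B m) ≠ 0)
    (hx : ε (S.B x) ≠ 0) (hs : S.B.repr (𝒮 (S.B x)) m ≠ 0) : S.B m * S.B x = S.B (S.d 1) := by
  obtain ⟨z, hz, hmx⟩ := S.exists_mul_eq hm hx
  have hexp : 𝒮 (S.B x) * S.B x = ∑ n, S.B.repr (𝒮 (S.B x)) n • (S.B n * S.B x) := by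
    conv_lhs => rw [← S.B.sum_repr (𝒮 (S.B x))]
    simp only [Finset.sum_mul, smul_mul_assoc]
  have hle := repr_le_repr_sum_of_nonneg S.B (fun n _ => repr_smul_nonneg S.B
    (S.pos.antipode_nonneg x n) (S.pos.repr_mul_nonneg (repr_self_nonneg S.B n)
      (repr_self_nonneg S.B x))) (Finset.mem_univ m)
  rw [← hexp] at hle
  have hz1 := (hle.trans (S.pos.repr_antipode_mul_le_one (CounitNormalized.counit_eq_one x hx))) z
  rw [hmx, map_smul, S.B.repr_self, Finsupp.smul_apply, Finsupp.single_eq_same, smul_eq_mul,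
    mul_one] at hz1
  obtain ⟨g, rfl⟩ := S.exists_d_eq_of_repr_one_ne_zero
    (((S.pos.antipode_nonneg x m).lt_of_ne' hs).trans_le hz1).ne'
  obtain rfl : g = 1 := by_contra fun hg => hz (S.d_counit_ne g hg)
  exact hmx

noncomputable instance : Mul S.GMinus := ⟨fun x y => ⟨_, (S.exists_mul_eq x.2 y.2).choose_spec.1⟩⟩

variable {S} in
theorem GMinus.basis_mul (x y : S.GMinus) : S.B (x * y).1 = S.B x.1 * S.B y.1 :=
  (S.exists_mul_eq x.2 y.2).choose_spec.2.symm

variable {S} in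
theorem GMinus.basis_inv_mul (x : S.GMinus) : S.B x⁻¹.1 * S.B x.1 = S.B (S.d 1) :=
  S.mul_eq_d_one_of_repr_antipode_ne_zero x⁻¹.2 x.2 x.repr_antipode_inv_ne_zero

noncomputable instance : Group S.GMinus :=
  Group.ofLeftAxioms
    (fun a b c => Subtype.ext <| S.B.injective <| by simp only [GMinus.basis_mul, mul_assoc])
    (fun a => Subtype.ext <| S.B.injective <| by
      rw [GMinus.basis_mul, GMinus.one_val, S.d_one_mul_of_counit_ne_zero a.2])
    (fun a => Subtype.ext <| S.B.injective <| by rw [GMinus.basis_mul, GMinus.basis_inv_mul]; rfl)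

variable {S} in
theorem GMinus.counit_basis (x : S.GMinus) : ε (S.B x.1) = 1 :=
  CounitNormalized.counit_eq_one _ x.2

variable {S} in
theorem GMinus.repr_antipode_eq_zero {x y : S.GMinus} (hy : y ≠ x⁻¹) :
    S.B.repr (𝒮 (S.B x.1)) y.1 = 0 := by
  by_contra hs
  refine hy (eq_inv_of_mul_eq_one_left (Subtype.ext (S.B.injective ?_)))
  rw [GMinus.basis_mul, GMinus.one_val, S.mul_eq_d_one_of_repr_antipode_ne_zero y.2 x.2 hs]

variable {S} in
theorem GMinus.repr_antipode_inv (x : S.GMinus) : S.B.repr (𝒮 (S.B x.1)) x⁻¹.1 = 1 := by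
  have hsum := counit_eq_sum_repr_mul S.B (𝒮 (S.B x.1))
  rw [HopfAlgebra.counit_antipode, GMinus.counit_basis,
    Finset.sum_eq_single x⁻¹.1 (fun n _ hn => ?_) (by simp), GMinus.counit_basis, mul_one] at hsum
  · exact hsum.symm
  · by_cases hεn : ε (S.B n) = 0
    · rw [hεn, mul_zero]
    · rw [GMinus.repr_antipode_eq_zero (y := ⟨n, hεn⟩) fun h => hn (congrArg Subtype.val h),
        zero_mul]

end SetupPlus

theorem stmt7 {H : Type} [Ring H] [HopfAlgebra ℂ H] {ι : Type} [Fintype ι]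
    {Gp : Type} [Group Gp] [Fintype Gp] (S : SetupPlus H ι Gp) :
    ∃ (lam : ι → ℝ) (C : Module.Basis ι ℂ H),
      (∀ i, 0 < lam i) ∧
      (∀ i, C i = (lam i : ℂ) • S.B i) ∧
      -- only the elements with ε(b) > 0 are rescaled; the d_{g₊} are unchanged
      (∀ i, Coalgebra.counit (R := ℂ) (S.B i) = 0 → lam i = 1) ∧
      (∀ g : Gp, lam (S.d g) = 1) ∧
      ∃ (Γ : FinGrp) (en : Γ.carrier → ι),
        Function.Injective en ∧
        -- G₋ = {b ∈ B : ε(b) ≠ 0} and, after the rescaling, ε = ∑_{b ∈ G₋} b*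
        (∀ i : ι, Coalgebra.counit (R := ℂ) (C i) ≠ 0 ↔ ∃ x : Γ.carrier, en x = i) ∧
        (∀ x : Γ.carrier, Coalgebra.counit (R := ℂ) (C (en x)) = 1) ∧
        -- G₋ is closed under the multiplication of H and forms a group
        (∀ x y : Γ.carrier, C (en x) * C (en y) = C (en (x * y))) ∧
        -- whose identity element is d_e, the unique d_{g₊} with ε(d_{g₊}) ≠ 0
        en 1 = S.d 1 ∧
        Coalgebra.counit (R := ℂ) (S.B (S.d 1)) = 1 ∧
        (∀ g : Gp, Coalgebra.counit (R := ℂ) (S.B (S.d g)) ≠ 0 → g = 1) ∧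
        -- Δ(e_{g₋}) = e_{g₋} ⊗ e_{g₋} + terms not in G₋ ⊗ G₋
        (∀ x : Γ.carrier,
          (C.tensorProduct C).repr (Coalgebra.comul (R := ℂ) (C (en x))) (en x, en x) = 1 ∧
          ∀ y z : Γ.carrier, ¬(y = x ∧ z = x) →
            (C.tensorProduct C).repr (Coalgebra.comul (R := ℂ) (C (en x))) (en y, en z) = 0) ∧
        -- S(e_{g₋}) = e_{g₋⁻¹} + terms not in G₋
        (∀ x : Γ.carrier,
          C.repr (HopfAlgebra.antipode (R := ℂ) (C (en x))) (en x⁻¹) = 1 ∧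
          ∀ y : Γ.carrier, y ≠ x⁻¹ →
            C.repr (HopfAlgebra.antipode (R := ℂ) (C (en x))) (en y) = 0) := by
  set T := S.normalize
  refine ⟨counitNormalizer S.B, T.B, S.pos.counitNormalizer_pos,
    positiveRescale_apply S.pos.counitNormalizer_pos,
    fun _ => counitNormalizer_of_counit_eq_zero, S.counitNormalizer_d,
    ⟨T.GMinus⟩, Subtype.val, Subtype.val_injective,
    fun i => ⟨fun hi => ⟨⟨i, hi⟩, rfl⟩, ?_⟩,
    fun x => x.counit_basis,
    fun x y => (x.basis_mul y).symm,
    rfl, S.d_counit_one, fun g hg => by_contra fun h => hg (S.d_counit_ne g h),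
    fun x => ⟨T.pos.tensor_repr_comul_self x.counit_basis, fun y z hyz => ?_⟩,
    fun x => ⟨x.repr_antipode_inv, fun y hy => SetupPlus.GMinus.repr_antipode_eq_zero hy⟩⟩
  · rintro ⟨x, rfl⟩
    exact x.2
  · exact T.pos.tensor_repr_comul_eq_zero_of_counit_ne_zero y.2 z.2
      fun h => hyz ⟨Subtype.ext h.1, Subtype.ext h.2⟩
end

section
/- In the standard setup for a finite-dimensional Hopf algebra H over ℂ with positive basis B, for any b ∈ B with α₋(b) = ḡ₋ and β₋(b) = g₋, one has Δ(b) = e_{ḡ₋} ⊗ b + b ⊗ e_{g₋} + terms lying neither in B⊗G₋ nor in G₋⊗B; that is, the only term of Δ(b) lying in G₋⊗B is e_{ḡ₋}⊗b and it occurs with coefficient 1, and the only term of Δ(b) lying in B⊗G₋ is b⊗e_{g₋} and it occurs with coefficient 1. -/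
/-!
Pairing `Δ(b)` with `e_h* ⊗ b*` reads off the coefficient of `e_h ⊗ b`, so the hypotheses on
products in `H*` settle the terms `e_h ⊗ b`. For a term `e_h ⊗ b'` with `b' ≠ b`, apply
`ε ⊗ id`: the counit axiom gives `∑ᵢ ε(bᵢ) · [Δ b](bᵢ, b') = δ_{b b'} = 0`, a sum of nonnegative
terms by positivity of the basis, and `ε(e_h) = 1` forces `[Δ b](e_h, b') = 0`. The terms in
`B ⊗ G₋` are handled symmetrically.
-/

open scoped TensorProduct ComplexOrder

/-- The convolution product on the dual `H* = Hom(H, ℂ)` of a Hopf algebra `H`: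
`⟨f * g, x⟩ = (f ⊗ g)(Δ x)`.  This is the multiplication of the dual Hopf algebra. -/
noncomputable def dualMul {H : Type*} [Ring H] [HopfAlgebra ℂ H]
    (f g : Module.Dual ℂ H) : Module.Dual ℂ H :=
  (TensorProduct.dualDistrib ℂ H H (f ⊗ₜ[ℂ] g)) ∘ₗ (Coalgebra.comul (R := ℂ) (A := H))

namespace Module.Basis

variable {R M N ι κ : Type*} [CommSemiring R] [AddCommMonoid M] [AddCommMonoid N]
  [Module R M] [Module R N]

theorem dualDistrib_coord_tmul_coord (b : Basis ι R M) (c : Basis κ R N) (i : ι) (j : κ)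
    (z : M ⊗[R] N) :
    TensorProduct.dualDistrib R M N (b.coord i ⊗ₜ c.coord j) z =
      (b.tensorProduct c).repr z (i, j) := by
  classical
  suffices TensorProduct.dualDistrib R M N (b.coord i ⊗ₜ c.coord j) =
      (b.tensorProduct c).coord (i, j) from LinearMap.congr_fun this z
  refine (b.tensorProduct c).ext fun ⟨i', j'⟩ => ?_
  simp [Finsupp.single_apply, ← ite_and, and_comm, eq_comm]

end Module.Basis

namespace Coalgebra

variable {R A ι : Type*} [CommSemiring R] [AddCommMonoid A] [Module R A] [Coalgebra R A]

theorem dualDistrib_counit_tmul_comul (f : Module.Dual R A) (a : A) :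
    TensorProduct.dualDistrib R A A (counit ⊗ₜ f) (comul a) = f a := by
  have : TensorProduct.dualDistrib R A A (counit ⊗ₜ f) =
      f ∘ₗ (_root_.TensorProduct.lid R A).toLinearMap ∘ₗ counit.rTensor A :=
    TensorProduct.ext' fun x y => by simp
  simp [this, rTensor_counit_comul]

theorem dualDistrib_tmul_counit_comul (f : Module.Dual R A) (a : A) :
    TensorProduct.dualDistrib R A A (f ⊗ₜ counit) (comul a) = f a := by
  have : TensorProduct.dualDistrib R A A (f ⊗ₜ counit) =
      f ∘ₗ (_root_.TensorProduct.rid R A).toLinearMap ∘ₗ counit.lTensor A :=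
    TensorProduct.ext' fun x y => by simp [mul_comm]
  simp [this, lTensor_counit_comul]

theorem sum_counit_mul_repr_comul_left [Fintype ι] (B : Module.Basis ι R A) (a : A) (j : ι) :
    ∑ i, counit (B i) * (B.tensorProduct B).repr (comul a) (i, j) = B.repr a j := by
  calc _ = TensorProduct.dualDistrib R A A
        ((∑ i, (counit (B i) : R) • B.coord i) ⊗ₜ B.coord j) (comul a) := by
        simp only [TensorProduct.sum_tmul, ← TensorProduct.smul_tmul', map_sum, map_smul,
          LinearMap.coe_sum, Finset.sum_apply, LinearMap.smul_apply, smul_eq_mul,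
          B.dualDistrib_coord_tmul_coord]
    _ = B.repr a j := by
        rw [B.sum_dual_apply_smul_coord, dualDistrib_counit_tmul_comul, B.coord_apply]

theorem sum_counit_mul_repr_comul_right [Fintype ι] (B : Module.Basis ι R A) (a : A) (i : ι) :
    ∑ j, counit (B j) * (B.tensorProduct B).repr (comul a) (i, j) = B.repr a i := by
  calc _ = TensorProduct.dualDistrib R A A
        (B.coord i ⊗ₜ (∑ j, (counit (B j) : R) • B.coord j)) (comul a) := by
        simp only [TensorProduct.tmul_sum, TensorProduct.tmul_smul, map_sum, map_smul,
          LinearMap.coe_sum, Finset.sum_apply, LinearMap.smul_apply, smul_eq_mul,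
          B.dualDistrib_coord_tmul_coord]
    _ = B.repr a i := by
        rw [B.sum_dual_apply_smul_coord, dualDistrib_tmul_counit_comul, B.coord_apply]

end Coalgebra

namespace IsPositiveBasis

variable {H ι : Type*} [Ring H] [HopfAlgebra ℂ H] [Fintype ι] {B : Module.Basis ι ℂ H}

theorem repr_comul_eq_zero_of_counit_ne_zero_left (hB : IsPositiveBasis B) {i j k : ι}
    (hi : Coalgebra.counit (R := ℂ) (B i) ≠ 0) (hjk : j ≠ k) :
    (B.tensorProduct B).repr (Coalgebra.comul (R := ℂ) (B k)) (i, j) = 0 := by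
  have hsum := Coalgebra.sum_counit_mul_repr_comul_left B (B k) j
  rw [B.repr_self, Finsupp.single_eq_of_ne hjk] at hsum
  have hterm := (Finset.sum_eq_zero_iff_of_nonneg fun i _ =>
    _root_.mul_nonneg (hB.counit_nonneg i) (hB.comul_nonneg k i j)).1 hsum i (Finset.mem_univ i)
  exact (mul_eq_zero.1 hterm).resolve_left hi

theorem repr_comul_eq_zero_of_counit_ne_zero_right (hB : IsPositiveBasis B) {i j k : ι}
    (hj : Coalgebra.counit (R := ℂ) (B j) ≠ 0) (hik : i ≠ k) :
    (B.tensorProduct B).repr (Coalgebra.comul (R := ℂ) (B k)) (i, j) = 0 := by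
  have hsum := Coalgebra.sum_counit_mul_repr_comul_right B (B k) i
  rw [B.repr_self, Finsupp.single_eq_of_ne hik] at hsum
  have hterm := (Finset.sum_eq_zero_iff_of_nonneg fun j _ =>
    _root_.mul_nonneg (hB.counit_nonneg j) (hB.comul_nonneg k i j)).1 hsum j (Finset.mem_univ j)
  exact (mul_eq_zero.1 hterm).resolve_left hj

end IsPositiveBasis

section Setup

variable {H ι Gp Gn : Type*} [Ring H] [HopfAlgebra ℂ H] [Fintype ι] [DecidableEq ι]
  [Group Gp] [Fintype Gp] [Group Gn] [Fintype Gn]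

theorem dualMul_dualBasis_apply (B : Module.Basis ι ℂ H) (i j : ι) (x : H) :
    dualMul (B.dualBasis i) (B.dualBasis j) x =
      (B.tensorProduct B).repr (Coalgebra.comul (R := ℂ) x) (i, j) := by
  rw [B.coe_dualBasis]
  exact B.dualDistrib_coord_tmul_coord B i j _

theorem isAlphaMinus_of_dualMul (S : SetupFull H ι Gp Gn) {b : ι} {x : Gn}
    (ha : dualMul (S.B.dualBasis (S.en x)) (S.B.dualBasis b) = S.B.dualBasis b)
    (ha' : ∀ y : Gn, y ≠ x → dualMul (S.B.dualBasis (S.en y)) (S.B.dualBasis b) = 0) :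
    IsAlphaMinus S b x := by
  refine ⟨?_, fun y j hyj => ?_⟩
  · rw [← dualMul_dualBasis_apply, ha, S.B.dualBasis_apply_self, if_pos rfl]
  obtain rfl | hj := eq_or_ne j b
  · rw [← dualMul_dualBasis_apply, ha' y fun h => hyj ⟨h, rfl⟩, LinearMap.zero_apply]
  · exact S.pos.repr_comul_eq_zero_of_counit_ne_zero_left (by simp [S.en_counit]) hj

theorem isBetaMinus_of_dualMul (S : SetupFull H ι Gp Gn) {b : ι} {x : Gn}
    (hb : dualMul (S.B.dualBasis b) (S.B.dualBasis (S.en x)) = S.B.dualBasis b)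
    (hb' : ∀ y : Gn, y ≠ x → dualMul (S.B.dualBasis b) (S.B.dualBasis (S.en y)) = 0) :
    IsBetaMinus S b x := by
  refine ⟨?_, fun y j hyj => ?_⟩
  · rw [← dualMul_dualBasis_apply, hb, S.B.dualBasis_apply_self, if_pos rfl]
  obtain rfl | hj := eq_or_ne j b
  · rw [← dualMul_dualBasis_apply, hb' y fun h => hyj ⟨h, rfl⟩, LinearMap.zero_apply]
  · exact S.pos.repr_comul_eq_zero_of_counit_ne_zero_right (by simp [S.en_counit]) hj

end Setup

theorem stmt8 {H : Type} [Ring H] [HopfAlgebra ℂ H] {ι : Type} [Fintype ι]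
    [DecidableEq ι] {Gp : Type} [Group Gp] [Fintype Gp] {Gn : Type} [Group Gn]
    [Fintype Gn] (S : SetupFull H ι Gp Gn) (b : ι) (gbar g : Gn)
    -- α₋(b) = ḡ₋, i.e. e_{h₋}* b* = δ_{ḡ₋,h₋} b* in H*
    (ha : dualMul (S.B.dualBasis (S.en gbar)) (S.B.dualBasis b) = S.B.dualBasis b)
    (ha' : ∀ y : Gn, y ≠ gbar →
      dualMul (S.B.dualBasis (S.en y)) (S.B.dualBasis b) = 0)
    -- β₋(b) = g₋, i.e. b* e_{h₋}* = δ_{g₋,h₋} b* in H*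
    (hb : dualMul (S.B.dualBasis b) (S.B.dualBasis (S.en g)) = S.B.dualBasis b)
    (hb' : ∀ y : Gn, y ≠ g →
      dualMul (S.B.dualBasis b) (S.B.dualBasis (S.en y)) = 0) :
    -- Δ(b) = e_{ḡ₋} ⊗ b + b ⊗ e_{g₋} + terms neither in B ⊗ G₋ nor in G₋ ⊗ B
    ((S.B.tensorProduct S.B).repr (Coalgebra.comul (R := ℂ) (S.B b)) (S.en gbar, b) = 1) ∧
    (∀ (y : Gn) (j : ι), ¬(y = gbar ∧ j = b) →
      (S.B.tensorProduct S.B).repr (Coalgebra.comul (R := ℂ) (S.B b)) (S.en y, j) = 0) ∧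
    ((S.B.tensorProduct S.B).repr (Coalgebra.comul (R := ℂ) (S.B b)) (b, S.en g) = 1) ∧
    (∀ (y : Gn) (j : ι), ¬(y = g ∧ j = b) →
      (S.B.tensorProduct S.B).repr (Coalgebra.comul (R := ℂ) (S.B b)) (j, S.en y) = 0) := by
  obtain ⟨hleft, hleft'⟩ := isAlphaMinus_of_dualMul S ha ha'
  obtain ⟨hright, hright'⟩ := isBetaMinus_of_dualMul S hb hb'
  exact ⟨hleft, hleft', hright, hright'⟩
end

section
/- In the standard setup for a finite-dimensional Hopf algebra H over ℂ with positive basis B: if the product b₁b₂ contains the term b (for b, b₁, b₂ ∈ B), then α₊(b₁) = α₊(b) and β₊(b₂) = β₊(b); and if Δ(b) contains the term b₁⊗b₂, then α₊(b) = α₊(b₁)·α₊(b₂) and β₊(b) = β₊(b₁)·β₊(b₂) in the group G₊. -/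
open scoped TensorProduct ComplexOrder

/-! The argument is a single positivity observation. If a linear map `f` has a nonnegative
matrix in the basis `B`, fixes `B b` and kills a vector `x` with nonnegative coordinates, then
`x_b = 0`, because the `b`-coordinate of `f x` is at least `x_b`. Take `f` to be multiplication
by `d_g` on `H` (if `b₁b₂` contains `b`), or by `d_{g₁} ⊗ d_{g₂}` on `H ⊗ H` (if `Δ(b)` contains
`b₁ ⊗ b₂`), where `(d_{g₁} ⊗ d_{g₂}) Δ(d_g) = 0` unless `g = g₁g₂`. -/

namespace Module.Basis

variable {R ι : Type*} [CommRing R] [PartialOrder R] [IsOrderedRing R]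

theorem repr_eq_zero_of_apply_eq_zero [Fintype ι] {M : Type*} [AddCommGroup M] [Module R M]
    (B : Basis ι R M) (f : M →ₗ[R] M) (hf : ∀ j k, 0 ≤ B.repr (f (B j)) k) {x : M}
    (hx : ∀ j, 0 ≤ B.repr x j) {b : ι} (hb : f (B b) = B b) (hfx : f x = 0) :
    B.repr x b = 0 := by
  have hsum : B.repr (f x) b = ∑ j, B.repr x j * B.repr (f (B j)) b := by
    conv_lhs => rw [← B.sum_repr x]
    simp only [map_sum, map_smul, Finsupp.coe_finsetSum, Finset.sum_apply,
      Finsupp.smul_apply, smul_eq_mul]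
  rw [hfx, map_zero, Finsupp.zero_apply, eq_comm,
    Finset.sum_eq_zero_iff_of_nonneg fun j _ => mul_nonneg (hx j) (hf j b)] at hsum
  simpa [hb] using hsum b (Finset.mem_univ b)

theorem tensorProduct_repr_mul_nonneg {κ A A' : Type*} [Ring A] [Algebra R A] [Ring A']
    [Algebra R A'] (B : Basis ι R A) (C : Basis κ R A')
    (hB : ∀ i j k, 0 ≤ B.repr (B i * B j) k) (hC : ∀ i j k, 0 ≤ C.repr (C i * C j) k)
    (i j k : ι × κ) :
    0 ≤ (B.tensorProduct C).repr (B.tensorProduct C i * B.tensorProduct C j) k := by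
  rw [tensorProduct_apply', tensorProduct_apply', Algebra.TensorProduct.tmul_mul_tmul,
    tensorProduct_repr_tmul_apply]
  exact mul_nonneg (hC _ _ _) (hB _ _ _)

end Module.Basis

namespace SetupPlus

variable {H : Type*} [Ring H] [HopfAlgebra ℂ H] {ι : Type*} [Fintype ι]
  {Gp : Type*} [Group Gp] [Fintype Gp] (S : SetupPlus H ι Gp)

theorem tmul_mul_comul_d_eq_zero {g g₁ g₂ : Gp} (hg : g ≠ g₁ * g₂) :
    (S.B (S.d g₁) ⊗ₜ[ℂ] S.B (S.d g₂)) * Coalgebra.comul (R := ℂ) (S.B (S.d g)) = 0 := by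
  rw [S.d_comul, Finset.mul_sum]
  refine Finset.sum_eq_zero fun h _ => ?_
  rw [Algebra.TensorProduct.tmul_mul_tmul]
  by_cases hh : g₁ = h
  · subst hh
    rw [S.d_mul_ne g₂ _ fun he => hg (by rw [he, mul_inv_cancel_left]), TensorProduct.tmul_zero]
  · rw [S.d_mul_ne _ _ hh, TensorProduct.zero_tmul]

theorem comul_d_mul_tmul_eq_zero {g g₁ g₂ : Gp} (hg : g ≠ g₁ * g₂) :
    Coalgebra.comul (R := ℂ) (S.B (S.d g)) * (S.B (S.d g₁) ⊗ₜ[ℂ] S.B (S.d g₂)) = 0 := by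
  rw [S.d_comul, Finset.sum_mul]
  refine Finset.sum_eq_zero fun h _ => ?_
  rw [Algebra.TensorProduct.tmul_mul_tmul]
  by_cases hh : h = g₁
  · subst hh
    rw [S.d_mul_ne _ g₂ fun he => hg (by rw [← he, mul_inv_cancel_left]), TensorProduct.tmul_zero]
  · rw [S.d_mul_ne _ _ hh, TensorProduct.zero_tmul]

variable {S}

theorem alphaPlus_eq_of_repr_mul_ne_zero {b b₁ b₂ : ι}
    (hb : S.B.repr (S.B b₁ * S.B b₂) b ≠ 0) {g₁ g : Gp} (h₁ : IsAlphaPlus S b₁ g₁)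
    (h : IsAlphaPlus S b g) : g₁ = g := by
  by_contra hne
  refine hb (S.B.repr_eq_zero_of_apply_eq_zero (LinearMap.mulLeft ℂ (S.B (S.d g)))
    (fun _ _ => S.pos.mul_nonneg _ _ _) (S.pos.mul_nonneg _ _) h ?_)
  rw [LinearMap.mulLeft_apply, ← h₁, ← mul_assoc, ← mul_assoc, S.d_mul_ne g g₁ (Ne.symm hne),
    zero_mul, zero_mul]

theorem betaPlus_eq_of_repr_mul_ne_zero {b b₁ b₂ : ι}
    (hb : S.B.repr (S.B b₁ * S.B b₂) b ≠ 0) {g₂ g : Gp} (h₂ : IsBetaPlus S b₂ g₂)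
    (h : IsBetaPlus S b g) : g₂ = g := by
  by_contra hne
  refine hb (S.B.repr_eq_zero_of_apply_eq_zero (LinearMap.mulRight ℂ (S.B (S.d g)))
    (fun _ _ => S.pos.mul_nonneg _ _ _) (S.pos.mul_nonneg _ _) h ?_)
  rw [LinearMap.mulRight_apply, ← h₂, mul_assoc, mul_assoc, S.d_mul_ne g₂ g hne,
    mul_zero, mul_zero]

theorem alphaPlus_eq_mul_of_repr_comul_ne_zero {b b₁ b₂ : ι}
    (hb : (S.B.tensorProduct S.B).repr (Coalgebra.comul (R := ℂ) (S.B b)) (b₁, b₂) ≠ 0)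
    {g g₁ g₂ : Gp} (h : IsAlphaPlus S b g) (h₁ : IsAlphaPlus S b₁ g₁)
    (h₂ : IsAlphaPlus S b₂ g₂) : g = g₁ * g₂ := by
  by_contra hne
  have hB := S.B.tensorProduct_repr_mul_nonneg S.B S.pos.mul_nonneg S.pos.mul_nonneg
  refine hb ((S.B.tensorProduct S.B).repr_eq_zero_of_apply_eq_zero
    (LinearMap.mulLeft ℂ (S.B.tensorProduct S.B (S.d g₁, S.d g₂))) (hB _)
    (fun q => S.pos.comul_nonneg b q.1 q.2) ?_ ?_)
  all_goals rw [LinearMap.mulLeft_apply, Module.Basis.tensorProduct_apply]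
  · rw [Module.Basis.tensorProduct_apply, Algebra.TensorProduct.tmul_mul_tmul, h₁, h₂]
  · rw [← h, Bialgebra.comul_mul, ← mul_assoc, S.tmul_mul_comul_d_eq_zero hne, zero_mul]

theorem betaPlus_eq_mul_of_repr_comul_ne_zero {b b₁ b₂ : ι}
    (hb : (S.B.tensorProduct S.B).repr (Coalgebra.comul (R := ℂ) (S.B b)) (b₁, b₂) ≠ 0)
    {g g₁ g₂ : Gp} (h : IsBetaPlus S b g) (h₁ : IsBetaPlus S b₁ g₁)
    (h₂ : IsBetaPlus S b₂ g₂) : g = g₁ * g₂ := by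
  by_contra hne
  have hB := S.B.tensorProduct_repr_mul_nonneg S.B S.pos.mul_nonneg S.pos.mul_nonneg
  refine hb ((S.B.tensorProduct S.B).repr_eq_zero_of_apply_eq_zero
    (LinearMap.mulRight ℂ (S.B.tensorProduct S.B (S.d g₁, S.d g₂))) (fun j k => hB j _ k)
    (fun q => S.pos.comul_nonneg b q.1 q.2) ?_ ?_)
  all_goals rw [LinearMap.mulRight_apply, Module.Basis.tensorProduct_apply]
  · rw [Module.Basis.tensorProduct_apply, Algebra.TensorProduct.tmul_mul_tmul, h₁, h₂]
  · rw [← h, Bialgebra.comul_mul, mul_assoc, S.comul_d_mul_tmul_eq_zero hne, mul_zero]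

end SetupPlus

theorem stmt9 {H : Type} [Ring H] [HopfAlgebra ℂ H] {ι : Type} [Fintype ι]
    {Gp : Type} [Group Gp] [Fintype Gp] (S : SetupPlus H ι Gp) :
    -- if b₁b₂ contains b, then α₊(b₁) = α₊(b) and β₊(b₂) = β₊(b)
    (∀ b b₁ b₂ : ι, S.B.repr (S.B b₁ * S.B b₂) b ≠ 0 →
      (∀ g₁ g : Gp, IsAlphaPlus S b₁ g₁ → IsAlphaPlus S b g → g₁ = g) ∧
      (∀ g₂ g : Gp, IsBetaPlus S b₂ g₂ → IsBetaPlus S b g → g₂ = g)) ∧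
    -- if Δ(b) contains b₁ ⊗ b₂, then α₊(b) = α₊(b₁)α₊(b₂) and β₊(b) = β₊(b₁)β₊(b₂)
    (∀ b b₁ b₂ : ι,
      (S.B.tensorProduct S.B).repr (Coalgebra.comul (R := ℂ) (S.B b)) (b₁, b₂) ≠ 0 →
      (∀ g g₁ g₂ : Gp, IsAlphaPlus S b g → IsAlphaPlus S b₁ g₁ → IsAlphaPlus S b₂ g₂ →
        g = g₁ * g₂) ∧
      (∀ g g₁ g₂ : Gp, IsBetaPlus S b g → IsBetaPlus S b₁ g₁ → IsBetaPlus S b₂ g₂ →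
        g = g₁ * g₂)) :=
  ⟨fun _ _ _ hb => ⟨fun _ _ => SetupPlus.alphaPlus_eq_of_repr_mul_ne_zero hb,
      fun _ _ => SetupPlus.betaPlus_eq_of_repr_mul_ne_zero hb⟩,
    fun _ _ _ hb => ⟨fun _ _ _ => SetupPlus.alphaPlus_eq_mul_of_repr_comul_ne_zero hb,
      fun _ _ _ => SetupPlus.betaPlus_eq_mul_of_repr_comul_ne_zero hb⟩⟩
end

section
/- In the standard setup for a finite-dimensional Hopf algebra H over ℂ with positive basis B, the following are equivalent for b ∈ B: (1) α₊(b) = e; (2) β₊(b) = e; (3) b ∈ G₋ (that is, ε(b) ≠ 0). In particular, there is no basis element b with α₊(b) = e and β₊(b) = g₊ ≠ e, nor with α₊(b) = g₊ ≠ e and β₊(b) = e. -/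
open scoped TensorProduct ComplexOrder

/-!
If `ε(b) = 0`, every term of the antipode identity `∑ S(b₁) b₂ = ε(b) 1 = 0` has nonnegative
coordinates, so `S(b₁) b₂ = 0` for each term `b₁ ⊗ b₂` of `Δ(b)`. The counit axiom
`∑ ε(b₁) b₂ = b` provides such a term with `b₂ = b` and `ε(b₁) ≠ 0`; as `ε(S(b₁)) = ε(b₁) ≠ 0`,
some `e_x ∈ G₋` occurs in `S(b₁)`, and positivity again gives `e_x b = 0`. Hence
`d_e b = e_{x⁻¹} e_x b = 0`, i.e. `α₊(b) ≠ e`. Conversely `d_e = e_e` fixes every element of the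
group `G₋`. The statement for `β₊` is the mirror image, and the last assertion follows because
`d_g d_h = 0` for `g ≠ h` makes `α₊(b)` and `β₊(b)` unique.
-/

open Coalgebra HopfAlgebra TensorProduct

namespace Module.Basis

variable {ι R M : Type*}

section Nonneg

variable [Semiring R] [PartialOrder R] [IsOrderedRing R] [AddCommMonoid M] [Module R M]

def IsNonneg (B : Basis ι R M) (x : M) : Prop :=
  ∀ i, 0 ≤ B.repr x i

theorem isNonneg_self (B : Basis ι R M) (i : ι) : B.IsNonneg (B i) := by
  classical
  intro j
  rw [repr_self, Finsupp.single_apply]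
  split_ifs <;> simp

theorem eq_zero_of_sum_smul_eq_zero [NoZeroDivisors R] (B : Basis ι R M) {α : Type*}
    {s : Finset α} {w : α → R} {x : α → M} (hw : ∀ t ∈ s, 0 ≤ w t)
    (hx : ∀ t ∈ s, B.IsNonneg (x t)) (hsum : ∑ t ∈ s, w t • x t = 0) {t : α} (ht : t ∈ s)
    (hwt : w t ≠ 0) : x t = 0 := by
  refine B.repr.injective (Finsupp.ext fun i => ?_)
  have h : ∑ t ∈ s, w t * B.repr (x t) i = 0 := by simpa using congr(B.repr $hsum i)
  rw [Finset.sum_eq_zero_iff_of_nonneg fun t ht => mul_nonneg (hw t ht) (hx t ht i)] at h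
  simpa [hwt] using h t ht

end Nonneg

section Algebra

variable [Fintype ι] [CommSemiring R] [PartialOrder R] [IsOrderedRing R] {A : Type*} [Semiring A]
  [Algebra R A] {B : Basis ι R A}

theorem IsNonneg.mul (hB : ∀ i j k, 0 ≤ B.repr (B i * B j) k) {x y : A} (hx : B.IsNonneg x)
    (hy : B.IsNonneg y) : B.IsNonneg (x * y) := by
  intro k
  rw [← B.sum_repr x, ← B.sum_repr y, Finset.sum_mul_sum]
  simp only [smul_mul_smul_comm, map_sum, map_smul, Finsupp.coe_finsetSum, Finset.sum_apply,
    Finsupp.smul_apply, smul_eq_mul]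
  exact Finset.sum_nonneg fun i _ => Finset.sum_nonneg fun j _ =>
    mul_nonneg (mul_nonneg (hx i) (hy j)) (hB i j k)

variable [NoZeroDivisors R]

theorem mul_eq_zero_of_repr_ne_zero (hB : ∀ i j k, 0 ≤ B.repr (B i * B j) k) {x y : A}
    (hx : B.IsNonneg x) (hy : B.IsNonneg y) (hxy : x * y = 0) {j : ι} (hj : B.repr x j ≠ 0) :
    B j * y = 0 := by
  refine B.eq_zero_of_sum_smul_eq_zero (fun t _ => hx t)
    (fun t _ => (B.isNonneg_self t).mul hB hy) ?_ (Finset.mem_univ j) hj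
  simp_rw [← smul_mul_assoc, ← Finset.sum_mul, B.sum_repr, hxy]

theorem mul_eq_zero_of_repr_ne_zero' (hB : ∀ i j k, 0 ≤ B.repr (B i * B j) k) {x y : A}
    (hx : B.IsNonneg x) (hy : B.IsNonneg y) (hyx : y * x = 0) {j : ι} (hj : B.repr x j ≠ 0) :
    y * B j = 0 := by
  refine B.eq_zero_of_sum_smul_eq_zero (fun t _ => hx t)
    (fun t _ => hy.mul hB (B.isNonneg_self t)) ?_ (Finset.mem_univ j) hj
  simp_rw [← mul_smul_comm, ← Finset.mul_sum, B.sum_repr, hyx]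

end Algebra

section Coalgebra

variable [Fintype ι] [CommSemiring R] [AddCommMonoid M] [Module R M]

theorem exists_repr_ne_zero_apply_ne_zero {N : Type*} [AddCommMonoid N] [Module R N]
    (B : Basis ι R M) (f : M →ₗ[R] N) {x : M} (hx : f x ≠ 0) :
    ∃ i, B.repr x i ≠ 0 ∧ f (B i) ≠ 0 := by
  rw [← B.sum_repr x, map_sum] at hx
  obtain ⟨i, -, hi⟩ := Finset.exists_ne_zero_of_sum_ne_zero hx
  rw [map_smul] at hi
  exact ⟨i, left_ne_zero_of_smul hi, right_ne_zero_of_smul hi⟩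

theorem comul_eq_sum [Coalgebra R M] (B : Basis ι R M) (a : M) :
    comul (R := R) a = ∑ p : ι × ι, (B.tensorProduct B).repr (comul a) p • (B p.1 ⊗ₜ B p.2) := by
  conv_lhs => rw [← (B.tensorProduct B).sum_repr (comul a)]
  simp only [tensorProduct_apply']

variable [Nontrivial R] [Coalgebra R M]

theorem exists_counit_ne_zero_comul_repr_ne_zero_left (B : Basis ι R M) (i : ι) :
    ∃ j, counit (R := R) (B j) ≠ 0 ∧ (B.tensorProduct B).repr (comul (B i)) (j, i) ≠ 0 := by
  classical
  let f : M ⊗[R] M →ₗ[R] R := B.coord i ∘ₗ (TensorProduct.lid R M).toLinearMap ∘ₗ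
    (counit (R := R)).rTensor M
  have hf : f (comul (B i)) ≠ 0 := by simp [f]
  obtain ⟨⟨j, k⟩, hc, hjk⟩ := (B.tensorProduct B).exists_repr_ne_zero_apply_ne_zero f hf
  have hjk : counit (R := R) (B j) * (if k = i then 1 else 0) ≠ 0 := by
    simpa [f, Finsupp.single_apply] using hjk
  obtain rfl : k = i := by by_contra h; simp [h] at hjk
  exact ⟨j, by simpa using hjk, hc⟩

theorem exists_counit_ne_zero_comul_repr_ne_zero_right (B : Basis ι R M) (i : ι) :
    ∃ j, counit (R := R) (B j) ≠ 0 ∧ (B.tensorProduct B).repr (comul (B i)) (i, j) ≠ 0 := by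
  classical
  let f : M ⊗[R] M →ₗ[R] R := B.coord i ∘ₗ (TensorProduct.rid R M).toLinearMap ∘ₗ
    (counit (R := R)).lTensor M
  have hf : f (comul (B i)) ≠ 0 := by simp [f]
  obtain ⟨⟨k, j⟩, hc, hjk⟩ := (B.tensorProduct B).exists_repr_ne_zero_apply_ne_zero f hf
  have hjk : counit (R := R) (B j) * (if k = i then 1 else 0) ≠ 0 := by
    simpa [f, Finsupp.single_apply, mul_comm] using hjk
  obtain rfl : k = i := by by_contra h; simp [h] at hjk
  exact ⟨j, by simpa using hjk, hc⟩

end Coalgebra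

end Module.Basis

namespace IsPositiveBasis

variable {H : Type*} [Ring H] [HopfAlgebra ℂ H] {ι : Type*} {B : Module.Basis ι ℂ H}

theorem isNonneg_antipode (hB : IsPositiveBasis B) (i : ι) : B.IsNonneg (antipode ℂ (B i)) :=
  hB.antipode_nonneg i

variable [Fintype ι]

theorem antipode_mul_eq_zero (hB : IsPositiveBasis B) {i : ι} (hi : counit (R := ℂ) (B i) = 0)
    {j k : ι} (hc : (B.tensorProduct B).repr (comul (B i)) (j, k) ≠ 0) :
    antipode ℂ (B j) * B k = 0 := by
  have hsum := mul_antipode_rTensor_comul_apply (R := ℂ) (B i)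
  rw [B.comul_eq_sum, hi] at hsum
  simp only [map_sum, map_smul, LinearMap.rTensor_tmul, LinearMap.mul'_apply, map_zero] at hsum
  exact B.eq_zero_of_sum_smul_eq_zero (s := Finset.univ)
    (w := (B.tensorProduct B).repr (comul (B i))) (x := fun p => antipode ℂ (B p.1) * B p.2)
    (fun p _ => hB.comul_nonneg i p.1 p.2)
    (fun p _ => (hB.isNonneg_antipode p.1).mul hB.mul_nonneg (B.isNonneg_self p.2))
    hsum (Finset.mem_univ (j, k)) hc

theorem mul_antipode_eq_zero (hB : IsPositiveBasis B) {i : ι} (hi : counit (R := ℂ) (B i) = 0)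
    {j k : ι} (hc : (B.tensorProduct B).repr (comul (B i)) (j, k) ≠ 0) :
    B j * antipode ℂ (B k) = 0 := by
  have hsum := mul_antipode_lTensor_comul_apply (R := ℂ) (B i)
  rw [B.comul_eq_sum, hi] at hsum
  simp only [map_sum, map_smul, LinearMap.lTensor_tmul, LinearMap.mul'_apply, map_zero] at hsum
  exact B.eq_zero_of_sum_smul_eq_zero (s := Finset.univ)
    (w := (B.tensorProduct B).repr (comul (B i))) (x := fun p => B p.1 * antipode ℂ (B p.2))
    (fun p _ => hB.comul_nonneg i p.1 p.2)
    (fun p _ => (B.isNonneg_self p.1).mul hB.mul_nonneg (hB.isNonneg_antipode p.2))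
    hsum (Finset.mem_univ (j, k)) hc

theorem exists_counit_ne_zero_mul_eq_zero (hB : IsPositiveBasis B) {i : ι}
    (hi : counit (R := ℂ) (B i) = 0) : ∃ k, counit (R := ℂ) (B k) ≠ 0 ∧ B k * B i = 0 := by
  obtain ⟨j, hj, hc⟩ := B.exists_counit_ne_zero_comul_repr_ne_zero_left i
  have hSj : counit (R := ℂ) (antipode ℂ (B j)) ≠ 0 := by rwa [counit_antipode]
  obtain ⟨k, hk, hεk⟩ := B.exists_repr_ne_zero_apply_ne_zero counit hSj
  exact ⟨k, hεk, B.mul_eq_zero_of_repr_ne_zero hB.mul_nonneg (hB.isNonneg_antipode j)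
    (B.isNonneg_self i) (hB.antipode_mul_eq_zero hi hc) hk⟩

theorem exists_counit_ne_zero_mul_eq_zero' (hB : IsPositiveBasis B) {i : ι}
    (hi : counit (R := ℂ) (B i) = 0) : ∃ k, counit (R := ℂ) (B k) ≠ 0 ∧ B i * B k = 0 := by
  obtain ⟨j, hj, hc⟩ := B.exists_counit_ne_zero_comul_repr_ne_zero_right i
  have hSj : counit (R := ℂ) (antipode ℂ (B j)) ≠ 0 := by rwa [counit_antipode]
  obtain ⟨k, hk, hεk⟩ := B.exists_repr_ne_zero_apply_ne_zero counit hSj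
  exact ⟨k, hεk, B.mul_eq_zero_of_repr_ne_zero' hB.mul_nonneg (hB.isNonneg_antipode j)
    (B.isNonneg_self i) (hB.mul_antipode_eq_zero hi hc) hk⟩

end IsPositiveBasis

section

variable {H : Type*} [Ring H] [HopfAlgebra ℂ H] {ι : Type*} [Fintype ι]
  {Gp : Type*} [Group Gp] [Fintype Gp] {Gn : Type*} [Group Gn] [Fintype Gn]

namespace SetupPlus

variable (S : SetupPlus H ι Gp)

theorem isAlphaPlus_unique {i : ι} {g h : Gp} (hg : IsAlphaPlus S i g) (hh : IsAlphaPlus S i h) :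
    g = h := by
  by_contra hne
  apply S.B.ne_zero i
  rw [← hh, ← hg, ← mul_assoc, S.d_mul_ne h g (Ne.symm hne), zero_mul]

theorem isBetaPlus_unique {i : ι} {g h : Gp} (hg : IsBetaPlus S i g) (hh : IsBetaPlus S i h) :
    g = h := by
  by_contra hne
  apply S.B.ne_zero i
  rw [← hh, ← hg, mul_assoc, S.d_mul_ne g h hne, mul_zero]

end SetupPlus

namespace SetupFull

variable (S : SetupFull H ι Gp Gn)

theorem isAlphaPlus_one_iff (i : ι) :
    IsAlphaPlus S.toSetupPlus i 1 ↔ counit (R := ℂ) (S.B i) ≠ 0 := by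
  refine ⟨fun h hi => ?_, fun hi => ?_⟩
  · obtain ⟨k, hk, hki⟩ := S.pos.exists_counit_ne_zero_mul_eq_zero hi
    obtain ⟨y, rfl⟩ := (S.en_range k).1 hk
    apply S.B.ne_zero i
    rw [← h, ← S.en_one, ← inv_mul_cancel y, ← S.en_mul, mul_assoc, hki, mul_zero]
  · obtain ⟨x, rfl⟩ := (S.en_range i).1 hi
    rw [IsAlphaPlus, ← S.en_one, S.en_mul, one_mul]

theorem isBetaPlus_one_iff (i : ι) :
    IsBetaPlus S.toSetupPlus i 1 ↔ counit (R := ℂ) (S.B i) ≠ 0 := by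
  refine ⟨fun h hi => ?_, fun hi => ?_⟩
  · obtain ⟨k, hk, hik⟩ := S.pos.exists_counit_ne_zero_mul_eq_zero' hi
    obtain ⟨y, rfl⟩ := (S.en_range k).1 hk
    apply S.B.ne_zero i
    rw [← h, ← S.en_one, ← mul_inv_cancel y, ← S.en_mul, ← mul_assoc, hik, zero_mul]
  · obtain ⟨x, rfl⟩ := (S.en_range i).1 hi
    rw [IsBetaPlus, ← S.en_one, S.en_mul, mul_one]

end SetupFull

end

theorem stmt10 {H : Type} [Ring H] [HopfAlgebra ℂ H] {ι : Type} [Fintype ι]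
    {Gp : Type} [Group Gp] [Fintype Gp] {Gn : Type} [Group Gn] [Fintype Gn]
    (S : SetupFull H ι Gp Gn) :
    -- (1) α₊(b) = e, (2) β₊(b) = e and (3) b ∈ G₋ (i.e. ε(b) ≠ 0) are equivalent
    (∀ b : ι,
      (IsAlphaPlus S.toSetupPlus b 1 ↔ Coalgebra.counit (R := ℂ) (S.B b) ≠ 0) ∧
      (IsBetaPlus S.toSetupPlus b 1 ↔ Coalgebra.counit (R := ℂ) (S.B b) ≠ 0) ∧
      (Coalgebra.counit (R := ℂ) (S.B b) ≠ 0 ↔ ∃ x : Gn, S.en x = b)) ∧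
    -- in particular B_{e,g₊} = B_{g₊,e} = ∅ for g₊ ≠ e
    (∀ (b : ι) (g : Gp), g ≠ 1 →
      ¬(IsAlphaPlus S.toSetupPlus b 1 ∧ IsBetaPlus S.toSetupPlus b g) ∧
      ¬(IsAlphaPlus S.toSetupPlus b g ∧ IsBetaPlus S.toSetupPlus b 1)) := by
  refine ⟨fun b => ⟨S.isAlphaPlus_one_iff b, S.isBetaPlus_one_iff b, S.en_range b⟩,
    fun b g hg => ⟨fun ⟨hα, hβ⟩ => hg ?_, fun ⟨hα, hβ⟩ => hg ?_⟩⟩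
  · exact S.isBetaPlus_unique hβ ((S.isBetaPlus_one_iff b).2 ((S.isAlphaPlus_one_iff b).1 hα))
  · exact S.isAlphaPlus_unique hα ((S.isAlphaPlus_one_iff b).2 ((S.isBetaPlus_one_iff b).1 hβ))
end
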